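/- arXiv:math/9611214 — 3 statements merged into one kernel-verified Lean document; each statement's English description precedes it below -/
import Mathlib

section
/- Let L be a Moufang loop of class at most 2 (every commutator and associator of L lies in the center Z(L)). Then for all c, d, e, f ∈ L and all integers n: [c,d] = [d,c]⁻¹; [cⁿ,d] = [c,d]ⁿ; [cd,e] = [c,e][d,e][c,d,e]³; [c,d,d] = [d,c,d] = [d,d,c] = 1; [c,d,e] = [d,c,e]⁻¹ = [d,e,c]; [cⁿ,d,e] = [c,d,e]ⁿ; and [cd,e,f] = [c,e,f][d,e,f]. -/
/-- An inverse property loop: a set with multiplication, identity, and two-sided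
inverses satisfying `a⁻¹(ax) = x = (xa)a⁻¹`. -/
class IPLoop (L : Type*) extends Mul L, One L, Inv L where
  one_mul : ∀ a : L, 1 * a = a
  mul_one : ∀ a : L, a * 1 = a
  inv_mul_cancel_left : ∀ a x : L, a⁻¹ * (a * x) = x
  mul_inv_cancel_right : ∀ a x : L, (x * a) * a⁻¹ = x

namespace IPLoop

variable {L : Type*} [IPLoop L]

/-- Powers with natural number exponent, `c^(n+1) = c * c^n`. -/
def npow (c : L) : ℕ → L
  | 0 => 1
  | n + 1 => c * npow c n

instance : Pow L ℕ := ⟨npow⟩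

/-- Powers with integer exponent. -/
def zpow (c : L) : ℤ → L
  | Int.ofNat n => c ^ n
  | Int.negSucc n => (c ^ (n + 1))⁻¹

instance : Pow L ℤ := ⟨zpow⟩

/-- The commutator `[c,d] = (dc)⁻¹(cd)`. -/
def comm (c d : L) : L := (d * c)⁻¹ * (c * d)

/-- The associator `[c,d,e] = (c(de))⁻¹((cd)e)`. -/
def assoc (c d e : L) : L := (c * (d * e))⁻¹ * ((c * d) * e)

/-- Membership in the center `Z(L)`. -/
def inCenter (z : L) : Prop :=
  (∀ x : L, comm z x = 1) ∧
  ∀ x y : L, assoc z x y = 1 ∧ assoc x z y = 1 ∧ assoc x y z = 1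

/-- The Moufang identity `((dc)e)c = d(c(ec))`. -/
def IsMoufang (L : Type*) [IPLoop L] : Prop :=
  ∀ c d e : L, ((d * c) * e) * c = d * (c * (e * c))

/-- A loop is of (central nilpotence) class at most 2 if every commutator and
every associator lies in the center. -/
def ClassTwo (L : Type*) [IPLoop L] : Prop :=
  (∀ c d : L, inCenter (comm c d)) ∧ ∀ c d e : L, inCenter (assoc c d e)

/-- The order of an element: least `n > 0` with `c^n = 1` (or `0` if none). -/
noncomputable def ordOf (c : L) : ℕ := sInf {n : ℕ | 0 < n ∧ c ^ n = 1}

/-- The subloop generated by a subset `S`. -/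
def subloopClosure (S : Set L) : Set L :=
  ⋂₀ {T : Set L | (1 : L) ∈ T ∧ (∀ x ∈ T, x⁻¹ ∈ T) ∧
      (∀ x ∈ T, ∀ y ∈ T, x * y ∈ T) ∧ S ⊆ T}

end IPLoop

/-!
Modulo its centre `Z`, a loop of class two is an abelian group `Q = L / Z`, and the associator
and the commutator descend to maps `Q³ → Z` and `Q² → Z`. The associator map satisfies the
cocycle identity; the Moufang laws and the antiautomorphism `x ↦ x⁻¹` make it change sign under
any transposition of its arguments, and an antisymmetric cocycle is additive in each argument.
The commutator identities then follow from the expansion of `[cd, e]` through associators.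
-/

section Abelian

variable {A B : Type*} [AddCommGroup A] [AddCommGroup B]

theorem map_zsmul_of_map_add_eq {g : A → B} {k : A → A → B}
    (hg : ∀ x y, g (x + y) = g x + g y + k x y) {q : A} (hk : ∀ n : ℤ, k (n • q) q = 0)
    (n : ℤ) : g (n • q) = n • g q := by
  have step (n : ℤ) : g ((n + 1) • q) = g (n • q) + g q := by
    rw [add_zsmul, one_zsmul, hg, hk, add_zero]
  induction n using Int.induction_on with
  | zero =>
    have := step 0
    rw [zero_add, one_zsmul, zero_zsmul] at this
    simpa using this
  | succ n ih => rw [step, ih, add_zsmul, one_zsmul]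
  | pred n ih =>
    have := step (-n - 1)
    rw [sub_add_cancel, ih] at this
    rw [sub_zsmul (g q), one_zsmul, ← sub_eq_add_neg]
    exact eq_sub_of_add_eq this.symm

variable {f : A → A → A → B}

theorem add_left_of_cocycle_of_antisymm
    (cocycle : ∀ q r s t, f r s t + f q (r + s) t + f q r s = f q r (s + t) + f (q + r) s t)
    (swap_left : ∀ q r s, f q r s = -f r q s) (swap_right : ∀ q r s, f q r s = -f q s r)
    (q r s t : A) : f (q + r) s t = f q s t + f r s t := by
  have cycle (q r s : A) : f q r s = f s q r := by rw [swap_left s, swap_right]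
  -- the cocycle identity, rewritten by antisymmetry as a relation among linearity defects;
  -- three instances of it isolate the defect of `q, r`
  have defect (a b c d : A) :
      (f (a + b) c d - f a c d - f b c d) + (f (b + c) a d - f b a d - f c a d)
        + (f (c + d) a b - f c a b - f d a b) = 0 := by
    rw [swap_left (b + c) a d, swap_left b a d, swap_left c a d, ← cycle a b (c + d),
      ← cycle a b c, ← cycle a b d]
    linear_combination (norm := abel) -cocycle a b c d
  have h := defect s r q t
  rw [swap_right (q + t) s r, swap_right q s r, swap_right t s r, add_comm q t] at h
  rw [add_comm q r]
  linear_combination (norm := abel) -defect q s r t + defect r t q s + h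

/-- The identities that the associator of a Moufang loop of class two induces on `L / Z(L)`,
written additively. -/
structure IsMoufangAssociator (f : A → A → A → B) : Prop where
  cocycle : ∀ q r s t, f r s t + f q (r + s) t + f q r s = f q r (s + t) + f (q + r) s t
  left_moufang : ∀ p q s, f q (p + q) s = -f p q s
  moufang : ∀ p r s, f (p + s) r s = -f p s (r + s)
  inv_rev : ∀ q r s, f q r s = f (-s) (-r) (-q)

namespace IsMoufangAssociator

variable (hf : IsMoufangAssociator f)
include hf

theorem swap_left (q r s : A) : f q r s = -f r q s := by
  have t1 (q r s : A) : f q r s = -f (r - q) q s := by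
    simpa using hf.left_moufang (r - q) q s
  have m (q r s : A) : f q r s = -f (q - s) s (r + s) := by
    simpa using hf.moufang (q - s) r s
  -- both sides lead to `± f (s + s - r) (r - s) (q + s)`
  calc f q r s = -f (r - q) q s := t1 ..
    _ = f (r - q - s) s (q + s) := by rw [m, neg_neg]
    _ = -f (q + s + s - r) (r - q - s) (q + s) := by rw [t1]; congr 2; abel
    _ = -f (-q - s) (q + s - r) (r - q - s - s) := by rw [hf.inv_rev]; congr 2 <;> abel
    _ = f (s - r) (r - q - s - s) (-s) := by rw [m, neg_neg]; congr 1 <;> abel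
    _ = f s (q + s + s - r) (r - s) := by rw [hf.inv_rev]; congr 1 <;> abel
    _ = -f (s + s - r) (r - s) (q + s) := by rw [m]; congr 2 <;> abel
    _ = f (r - s) s (q + s) := by rw [t1 (r - s)]; congr 2; abel
    _ = -f r q s := by rw [m r, neg_neg]

theorem swap_right (q r s : A) : f q r s = -f q s r := by
  rw [hf.inv_rev, hf.swap_left, hf.inv_rev (-r), neg_neg, neg_neg, neg_neg]

theorem cycle (q r s : A) : f q r s = f r s q := by
  rw [hf.swap_left, hf.swap_right, neg_neg]

theorem add_left (q r s t : A) : f (q + r) s t = f q s t + f r s t :=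
  add_left_of_cocycle_of_antisymm hf.cocycle hf.swap_left hf.swap_right q r s t

def leftHom (r s : A) : A →+ B := AddMonoidHom.mk' (f · r s) (hf.add_left · · r s)

theorem zsmul_left (n : ℤ) (q r s : A) : f (n • q) r s = n • f q r s :=
  map_zsmul (hf.leftHom r s) n q

theorem zero_left (r s : A) : f 0 r s = 0 :=
  (hf.leftHom r s).map_zero

theorem self_left (q s : A) : f q q s = 0 := by
  simpa [hf.zero_left] using hf.left_moufang 0 q s

theorem comm_add_left {g : A → A → B}
    (hg : ∀ q r s, g (q + r) s = f s q r + g q s + -f q s r + g r s + f q r s) (q r s : A) :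
    g (q + r) s = g q s + g r s + 3 • f q r s := by
  rw [hg, hf.cycle s q r, hf.swap_right q s r]
  abel

theorem comm_zsmul_left {g : A → A → B}
    (hg : ∀ q r s, g (q + r) s = f s q r + g q s + -f q s r + g r s + f q r s) (n : ℤ)
    (q s : A) : g (n • q) s = n • g q s :=
  map_zsmul_of_map_add_eq (g := (g · s)) (k := fun x y => 3 • f x y s)
    (fun x y => hf.comm_add_left hg x y s)
    (fun n => by rw [hf.zsmul_left, hf.self_left, smul_zero, smul_zero]) n

end IsMoufangAssociator

end Abelian

namespace IPLoop

variable {L : Type*} [IPLoop L]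

theorem inv_mul_cancel (a : L) : a⁻¹ * a = 1 := by
  simpa only [mul_one] using inv_mul_cancel_left a 1

theorem inv_inv (a : L) : a⁻¹⁻¹ = a := by
  simpa only [inv_mul_cancel, mul_one] using inv_mul_cancel_left a⁻¹ a

theorem mul_inv_cancel_left (a x : L) : a * (a⁻¹ * x) = x := by
  simpa only [inv_inv] using inv_mul_cancel_left a⁻¹ x

theorem inv_mul_cancel_right (a x : L) : x * a⁻¹ * a = x := by
  simpa only [inv_inv] using mul_inv_cancel_right a⁻¹ x

theorem mul_left_cancel {a x y : L} (h : a * x = a * y) : x = y := by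
  rw [← inv_mul_cancel_left a x, h, inv_mul_cancel_left]

theorem mul_right_cancel {a x y : L} (h : x * a = y * a) : x = y := by
  rw [← mul_inv_cancel_right a x, h, mul_inv_cancel_right]

theorem mul_inv_rev (a b : L) : (a * b)⁻¹ = b⁻¹ * a⁻¹ := by
  have h : b * (a * b)⁻¹ = a⁻¹ := by
    simpa only [inv_mul_cancel_left] using mul_inv_cancel_right (a * b) a⁻¹
  rw [← h, inv_mul_cancel_left]

theorem inv_mul_eq_one {a b : L} : a⁻¹ * b = 1 ↔ b = a := by
  refine ⟨fun h => ?_, fun h => h ▸ inv_mul_cancel a⟩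
  rw [← mul_inv_cancel_left a b, h, mul_one]

theorem mul_eq_mul_comm (x y : L) : x * y = y * x * comm x y :=
  (mul_inv_cancel_left _ _).symm

theorem mul_mul_eq_mul_assoc (x y z : L) : x * y * z = x * (y * z) * assoc x y z :=
  (mul_inv_cancel_left _ _).symm

theorem comm_eq_one_iff {x y : L} : comm x y = 1 ↔ x * y = y * x := inv_mul_eq_one

theorem assoc_eq_one_iff {x y z : L} : assoc x y z = 1 ↔ x * y * z = x * (y * z) :=
  inv_mul_eq_one

theorem comm_eq_inv_comm (c d : L) : comm c d = (comm d c)⁻¹ := by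
  rw [comm, comm, mul_inv_rev (c * d)⁻¹, inv_inv]

theorem inCenter_one : inCenter (1 : L) :=
  ⟨fun x => by rw [comm_eq_one_iff, one_mul, mul_one], fun x y => by
    simp only [assoc_eq_one_iff, one_mul, mul_one, and_self]⟩

namespace inCenter

variable {z : L} (hz : inCenter z)
include hz

theorem mul_comm (x : L) : z * x = x * z := comm_eq_one_iff.mp (hz.1 x)

theorem assoc_left (x y : L) : z * x * y = z * (x * y) := assoc_eq_one_iff.mp (hz.2 x y).1

theorem assoc_mid (x y : L) : x * z * y = x * (z * y) := assoc_eq_one_iff.mp (hz.2 x y).2.1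

theorem assoc_right (x y : L) : x * y * z = x * (y * z) := assoc_eq_one_iff.mp (hz.2 x y).2.2

theorem mul_right_comm (x y : L) : x * z * y = x * y * z := by
  rw [hz.assoc_mid, hz.mul_comm y, hz.assoc_right]

theorem inv : inCenter z⁻¹ := by
  have cancel (x : L) : z * (x * z⁻¹) = x := by
    rw [← hz.assoc_left, hz.mul_comm x, mul_inv_cancel_right]
  have comm_inv (x : L) : z⁻¹ * x = x * z⁻¹ := by
    simpa only [cancel] using inv_mul_cancel_left z (x * z⁻¹)
  refine ⟨fun x => comm_eq_one_iff.mpr (comm_inv x), fun x y => ⟨?_, ?_, ?_⟩⟩ <;>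
    rw [assoc_eq_one_iff]
  · apply mul_left_cancel (a := z)
    rw [← hz.assoc_left, mul_inv_cancel_left, mul_inv_cancel_left]
  · apply mul_left_cancel (a := z)
    rw [← hz.assoc_left, cancel, ← hz.assoc_left x, hz.mul_comm x, hz.assoc_mid,
      mul_inv_cancel_left]
  · apply mul_right_cancel (a := z)
    rw [inv_mul_cancel_right, hz.assoc_right, inv_mul_cancel_right]

theorem mul {w : L} (hw : inCenter w) : inCenter (z * w) := by
  refine ⟨fun x => comm_eq_one_iff.mpr ?_, fun x y => ⟨?_, ?_, ?_⟩⟩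
  · rw [hz.assoc_left, hw.mul_comm x, ← hz.assoc_left, hz.mul_comm, hw.assoc_right]
  all_goals rw [assoc_eq_one_iff]
  · rw [hz.assoc_left, hz.assoc_left, hw.assoc_mid, hw.assoc_left]
  · rw [← hw.assoc_right x z, hw.assoc_mid, hz.assoc_mid, hz.assoc_left]
  · rw [← hw.assoc_right (x * y) z, hz.assoc_right x y, hw.assoc_right x (y * z),
      hw.assoc_right y z]

theorem mul_inv_mul_mul (u v : L) : (u * z)⁻¹ * (v * z) = u⁻¹ * v := by
  rw [mul_inv_rev, hz.inv.mul_comm, hz.inv.assoc_mid, ← hz.mul_comm v, inv_mul_cancel_left]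

theorem assoc_mul_left (x y w : L) : assoc (x * z) y w = assoc x y w := by
  rw [assoc, assoc, hz.mul_right_comm x (y * w), hz.mul_right_comm x y,
    hz.mul_right_comm (x * y) w, hz.mul_inv_mul_mul]

theorem assoc_mul_mid (x y w : L) : assoc x (y * z) w = assoc x y w := by
  rw [assoc, assoc, hz.mul_right_comm y w, ← hz.assoc_right x (y * w), ← hz.assoc_right x y,
    hz.mul_right_comm (x * y) w, hz.mul_inv_mul_mul]

theorem assoc_mul_right (x y w : L) : assoc x y (w * z) = assoc x y w := by
  rw [assoc, assoc, ← hz.assoc_right y w, ← hz.assoc_right x (y * w),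
    ← hz.assoc_right (x * y) w, hz.mul_inv_mul_mul]

theorem comm_mul_left (x y : L) : comm (x * z) y = comm x y := by
  rw [comm, comm, ← hz.assoc_right y x, hz.mul_right_comm x y, hz.mul_inv_mul_mul]

theorem comm_mul_right (x y : L) : comm x (y * z) = comm x y := by
  rw [comm, comm, hz.mul_right_comm y x, ← hz.assoc_right x y, hz.mul_inv_mul_mul]

end inCenter

variable (L) in
def Center : Type _ := {z : L // inCenter z}

namespace Center

instance : Zero (Center L) := ⟨⟨1, inCenter_one⟩⟩

instance : Add (Center L) := ⟨fun a b => ⟨a.1 * b.1, a.2.mul b.2⟩⟩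

instance : Neg (Center L) := ⟨fun a => ⟨a.1⁻¹, a.2.inv⟩⟩

instance : AddCommGroup (Center L) where
  nsmul := nsmulRec
  zsmul := zsmulRec
  add_assoc a b c := Subtype.ext (a.2.assoc_left b.1 c.1)
  zero_add a := Subtype.ext (one_mul a.1)
  add_zero a := Subtype.ext (mul_one a.1)
  add_comm a b := Subtype.ext (a.2.mul_comm b.1)
  neg_add_cancel a := Subtype.ext (inv_mul_cancel a.1)

theorem val_nsmul (n : ℕ) (a : Center L) : (n • a).1 = a.1 ^ n := by
  induction n with
  | zero => rfl
  | succ n ih =>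
    rw [succ_nsmul]
    exact (congrArg (· * a.1) ih).trans (a.2.mul_comm _).symm

theorem val_zsmul (n : ℤ) (a : Center L) : (n • a).1 = a.1 ^ n := by
  cases n with
  | ofNat n => exact (congrArg Subtype.val (natCast_zsmul a n)).trans (val_nsmul n a)
  | negSucc n =>
    exact (congrArg Subtype.val (negSucc_zsmul a n)).trans (congrArg (·⁻¹) (val_nsmul _ a))

end Center

variable (L) in
def centralSetoid : Setoid L where
  r x y := ∃ z, inCenter z ∧ y = x * z
  iseqv := ⟨fun x => ⟨1, inCenter_one, (mul_one x).symm⟩,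
    fun ⟨z, hz, h⟩ => ⟨z⁻¹, hz.inv, by rw [h, mul_inv_cancel_right]⟩,
    fun ⟨z, hz, h⟩ ⟨w, hw, h'⟩ => ⟨z * w, hz.mul hw, by rw [h', h, hz.assoc_mid]⟩⟩

variable (L) in
def CentralQuotient : Type _ := Quotient (centralSetoid L)

namespace CentralQuotient

def of (x : L) : CentralQuotient L := Quotient.mk _ x

instance : Zero (CentralQuotient L) := ⟨of 1⟩

instance : Add (CentralQuotient L) where
  add := Quotient.map₂ (· * ·) <| by
    rintro x _ ⟨z, hz, rfl⟩ y _ ⟨w, hw, rfl⟩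
    exact ⟨z * w, hz.mul hw, by
      rw [← hw.assoc_right, ← hw.assoc_right, hz.mul_right_comm]⟩

instance : Neg (CentralQuotient L) where
  neg := Quotient.map (·⁻¹) <| by
    rintro x _ ⟨z, hz, rfl⟩
    exact ⟨z⁻¹, hz.inv, by rw [mul_inv_rev, hz.inv.mul_comm]⟩

instance [Fact (ClassTwo L)] : AddCommGroup (CentralQuotient L) where
  nsmul := nsmulRec
  zsmul := zsmulRec
  add_assoc := by
    rintro ⟨x⟩ ⟨y⟩ ⟨z⟩
    refine Quotient.sound ⟨(assoc x y z)⁻¹, ((Fact.out : ClassTwo L).2 x y z).inv, ?_⟩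
    beta_reduce
    rw [mul_mul_eq_mul_assoc x y z, mul_inv_cancel_right]
  zero_add := by
    rintro ⟨x⟩
    exact congrArg of (one_mul x)
  add_zero := by
    rintro ⟨x⟩
    exact congrArg of (mul_one x)
  add_comm := by
    rintro ⟨x⟩ ⟨y⟩
    exact Quotient.sound ⟨comm y x, (Fact.out : ClassTwo L).1 y x, mul_eq_mul_comm y x⟩
  neg_add_cancel := by
    rintro ⟨x⟩
    exact congrArg of (inv_mul_cancel x)

theorem of_zpow [Fact (ClassTwo L)] (x : L) (n : ℤ) : of (x ^ n) = n • of x := by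
  have of_npow (n : ℕ) : of (x ^ n) = n • of x := by
    induction n with
    | zero => rfl
    | succ n ih => rw [succ_nsmul', ← ih]; rfl
  cases n with
  | ofNat n => exact (of_npow n).trans (natCast_zsmul _ n).symm
  | negSucc n => exact (congrArg Neg.neg (of_npow (n + 1))).trans (negSucc_zsmul _ n).symm

end CentralQuotient

open CentralQuotient

section Induced

variable [Fact (ClassTwo L)]

def centralAssoc (q r s : CentralQuotient L) : Center L :=
  Quotient.liftOn q
    (fun x => Quotient.liftOn₂ r s (fun y z => ⟨assoc x y z, (Fact.out : ClassTwo L).2 x y z⟩)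
      (by
        rintro y z _ _ ⟨w, hw, rfl⟩ ⟨u, hu, rfl⟩
        exact Subtype.ext (by simp only [hw.assoc_mul_mid, hu.assoc_mul_right])))
    (by
      rintro x _ ⟨w, hw, rfl⟩
      induction r using Quotient.inductionOn
      induction s using Quotient.inductionOn
      exact Subtype.ext (hw.assoc_mul_left _ _ _).symm)

def centralComm (q r : CentralQuotient L) : Center L :=
  Quotient.liftOn₂ q r (fun x y => ⟨comm x y, (Fact.out : ClassTwo L).1 x y⟩) <| by
    rintro x y _ _ ⟨w, hw, rfl⟩ ⟨u, hu, rfl⟩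
    exact Subtype.ext (by simp only [hw.comm_mul_left, hu.comm_mul_right])

end Induced

section ClassTwo

variable (h2 : ClassTwo L)
include h2

theorem assoc_cocycle (c d e f : L) :
    assoc d e f * assoc c (d * e) f * assoc c d e = assoc c d (e * f) * assoc (c * d) e f := by
  have lhs : c * d * e * f =
      c * (d * (e * f)) * (assoc d e f * assoc c (d * e) f * assoc c d e) := by
    rw [mul_mul_eq_mul_assoc c d e, (h2.2 c d e).mul_right_comm, mul_mul_eq_mul_assoc c (d * e) f,
      mul_mul_eq_mul_assoc d e f, ← (h2.2 d e f).assoc_right, (h2.2 c (d * e) f).assoc_right,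
      (h2.2 c d e).assoc_right]
  have rhs : c * d * e * f = c * (d * (e * f)) * (assoc c d (e * f) * assoc (c * d) e f) := by
    rw [mul_mul_eq_mul_assoc (c * d) e f, mul_mul_eq_mul_assoc c d (e * f),
      (h2.2 (c * d) e f).assoc_right]
  exact mul_left_cancel (lhs.symm.trans rhs)

theorem comm_mul_left_expand (c d e : L) :
    comm (c * d) e =
      assoc e c d * comm c e * (assoc c e d)⁻¹ * comm d e * assoc c d e := by
  have hced : c * (e * d) = c * e * d * (assoc c e d)⁻¹ := by
    rw [mul_mul_eq_mul_assoc c e d, mul_inv_cancel_right]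
  refine mul_left_cancel (a := e * (c * d)) ((mul_eq_mul_comm (c * d) e).symm.trans ?_)
  rw [mul_mul_eq_mul_assoc c d e, mul_eq_mul_comm d e, ← (h2.1 d e).assoc_right, hced,
    mul_eq_mul_comm c e, (h2.1 c e).mul_right_comm, mul_mul_eq_mul_assoc e c d,
    (h2.1 c e).assoc_right, (h2.2 c e d).inv.assoc_right, (h2.1 d e).assoc_right,
    (h2.2 c d e).assoc_right]

theorem assoc_eq_assoc_inv_inv_inv (c d e : L) : assoc c d e = assoc e⁻¹ d⁻¹ c⁻¹ := by
  have h := congrArg (·⁻¹) (mul_mul_eq_mul_assoc c d e)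
  simp only [mul_inv_rev] at h
  rw [mul_mul_eq_mul_assoc e⁻¹ d⁻¹ c⁻¹, (h2.2 c d e).inv.mul_comm] at h
  refine mul_left_cancel (a := e⁻¹ * (d⁻¹ * c⁻¹)) ?_
  conv_lhs => rw [h]
  exact inv_mul_cancel_right _ _

end ClassTwo

section Moufang

variable (hM : IsMoufang L)
include hM

theorem flexible (c e : L) : c * e * c = c * (e * c) := by
  simpa only [one_mul] using hM c 1 e

theorem left_moufang (c d e : L) : c * e * c * d = c * (e * (c * d)) := by
  simpa only [mul_inv_rev, inv_inv] using (congrArg (·⁻¹) (hM c⁻¹ d⁻¹ e⁻¹)).symm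

theorem assoc_self_left (c d : L) : assoc c c d = 1 :=
  assoc_eq_one_iff.mpr (by simpa only [mul_one, one_mul] using left_moufang hM c d 1)

theorem assoc_self_ends (c d : L) : assoc c d c = 1 :=
  assoc_eq_one_iff.mpr (flexible hM c d)

theorem assoc_self_right (c d : L) : assoc d c c = 1 :=
  assoc_eq_one_iff.mpr (by simpa only [mul_one, one_mul] using hM c d 1)

theorem assoc_moufang (c d e : L) : assoc (d * e) c e = (assoc d e (c * e))⁻¹ := by
  have h1 : d * e * (c * e) * assoc (d * e) c e = d * (e * (c * e)) := by
    rw [← mul_mul_eq_mul_assoc, hM]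
  have h2 : d * (e * (c * e)) = d * e * (c * e) * (assoc d e (c * e))⁻¹ := by
    rw [mul_mul_eq_mul_assoc d e (c * e), mul_inv_cancel_right]
  exact mul_left_cancel (h1.trans h2)

theorem assoc_left_moufang (h2 : ClassTwo L) (c d e : L) :
    assoc c (e * c) d = (assoc e c d)⁻¹ := by
  have h1 : c * (e * c * d) * assoc c (e * c) d = c * e * c * d := by
    rw [← mul_mul_eq_mul_assoc, flexible hM]
  have h3 : c * (e * (c * d)) = c * (e * c * d) * (assoc e c d)⁻¹ := by
    rw [mul_mul_eq_mul_assoc e c d, ← (h2.2 e c d).assoc_right, mul_inv_cancel_right]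
  exact mul_left_cancel ((h1.trans (left_moufang hM c d e)).trans h3)

end Moufang

theorem isMoufangAssociator_centralAssoc [Fact (ClassTwo L)] (hM : IsMoufang L) :
    IsMoufangAssociator (centralAssoc (L := L)) where
  cocycle := by
    rintro ⟨q⟩ ⟨r⟩ ⟨s⟩ ⟨t⟩
    exact Subtype.ext (assoc_cocycle Fact.out q r s t)
  left_moufang := by
    rintro ⟨p⟩ ⟨q⟩ ⟨s⟩
    exact Subtype.ext (assoc_left_moufang hM Fact.out q s p)
  moufang := by
    rintro ⟨p⟩ ⟨r⟩ ⟨s⟩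
    exact Subtype.ext (assoc_moufang hM r p s)
  inv_rev := by
    rintro ⟨q⟩ ⟨r⟩ ⟨s⟩
    exact Subtype.ext (assoc_eq_assoc_inv_inv_inv Fact.out q r s)

theorem centralComm_add_left [Fact (ClassTwo L)] (q r s : CentralQuotient L) :
    centralComm (q + r) s = centralAssoc s q r + centralComm q s + -centralAssoc q s r
      + centralComm r s + centralAssoc q r s := by
  rcases q with ⟨c⟩; rcases r with ⟨d⟩; rcases s with ⟨e⟩
  exact Subtype.ext (comm_mul_left_expand Fact.out c d e)

section

variable (hM : IsMoufang L) (h2 : ClassTwo L)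
include hM h2

theorem assoc_swap_left (c d e : L) : assoc c d e = (assoc d c e)⁻¹ :=
  have : Fact (ClassTwo L) := ⟨h2⟩
  congrArg Subtype.val ((isMoufangAssociator_centralAssoc hM).swap_left (of c) (of d) (of e))

theorem assoc_cycle (c d e : L) : assoc c d e = assoc d e c :=
  have : Fact (ClassTwo L) := ⟨h2⟩
  congrArg Subtype.val ((isMoufangAssociator_centralAssoc hM).cycle (of c) (of d) (of e))

theorem assoc_mul_left (c d e f : L) : assoc (c * d) e f = assoc c e f * assoc d e f :=
  have : Fact (ClassTwo L) := ⟨h2⟩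
  congrArg Subtype.val
    ((isMoufangAssociator_centralAssoc hM).add_left (of c) (of d) (of e) (of f))

theorem assoc_zpow_left (c d e : L) (n : ℤ) : assoc (c ^ n) d e = assoc c d e ^ n := by
  have : Fact (ClassTwo L) := ⟨h2⟩
  have := congrArg Subtype.val
    ((isMoufangAssociator_centralAssoc hM).zsmul_left n (of c) (of d) (of e))
  rwa [← of_zpow, Center.val_zsmul] at this

theorem comm_mul_left (c d e : L) : comm (c * d) e = comm c e * comm d e * assoc c d e ^ 3 := by
  have : Fact (ClassTwo L) := ⟨h2⟩
  have := congrArg Subtype.val ((isMoufangAssociator_centralAssoc hM).comm_add_left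
    centralComm_add_left (of c) (of d) (of e))
  exact this.trans (congrArg (comm c e * comm d e * ·) (Center.val_nsmul 3 _))

theorem comm_zpow_left (c d : L) (n : ℤ) : comm (c ^ n) d = comm c d ^ n := by
  have : Fact (ClassTwo L) := ⟨h2⟩
  have := congrArg Subtype.val ((isMoufangAssociator_centralAssoc hM).comm_zsmul_left
    centralComm_add_left n (of c) (of d))
  rwa [← of_zpow, Center.val_zsmul] at this

end

end IPLoop

open IPLoop in
/-- Basic identities for commutators and associators in a Moufang loop of
class at most 2. -/
theorem stmt0 {L : Type*} [IPLoop L] (hM : IsMoufang L) (h2 : ClassTwo L) :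
    (∀ c d : L, comm c d = (comm d c)⁻¹) ∧
    (∀ (c d : L) (n : ℤ), comm (c ^ n) d = comm c d ^ n) ∧
    (∀ c d e : L, comm (c * d) e = (comm c e * comm d e) * assoc c d e ^ (3 : ℕ)) ∧
    (∀ c d : L, assoc c d d = 1 ∧ assoc d c d = 1 ∧ assoc d d c = 1) ∧
    (∀ c d e : L, assoc c d e = (assoc d c e)⁻¹ ∧ assoc c d e = assoc d e c) ∧
    (∀ (c d e : L) (n : ℤ), assoc (c ^ n) d e = assoc c d e ^ n) ∧
    (∀ c d e f : L, assoc (c * d) e f = assoc c e f * assoc d e f) :=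
  ⟨comm_eq_inv_comm, comm_zpow_left hM h2, comm_mul_left hM h2,
    fun c d => ⟨assoc_self_right hM d c, assoc_self_ends hM d c, assoc_self_left hM d c⟩,
    fun c d e => ⟨assoc_swap_left hM h2 c d e, assoc_cycle hM h2 c d e⟩,
    assoc_zpow_left hM h2, assoc_mul_left hM h2⟩
end

section
/- Let L be a Moufang loop of class at most 2 and let p be a prime. Then the set L_p of all elements of L whose order is a (finite) power of p is a subloop of L: it contains 1 and is closed under multiplication and inverses. -/
open IPLoop in
/-- The set of elements of `p`-power order. -/
noncomputable def Lp (L : Type*) [IPLoop L] (p : ℕ) : Set L :=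
  {c | ∃ k : ℕ, IPLoop.ordOf c = p ^ k}

namespace StmtAux
open IPLoop
variable {L : Type*} [IPLoop L]

lemma inv_mul_self (a : L) : a⁻¹ * a = 1 := by
  have h := IPLoop.inv_mul_cancel_left a 1
  rwa [IPLoop.mul_one] at h

lemma mul_inv_self (a : L) : a * a⁻¹ = 1 := by
  have h := IPLoop.mul_inv_cancel_right a 1
  rwa [IPLoop.one_mul] at h

lemma inv_inv (a : L) : a⁻¹⁻¹ = a := by
  have h1 : a⁻¹⁻¹ * (a⁻¹ * a) = a := IPLoop.inv_mul_cancel_left a⁻¹ a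
  rwa [inv_mul_self, IPLoop.mul_one] at h1

lemma mul_inv_cancel_left (a x : L) : a * (a⁻¹ * x) = x := by
  have h := IPLoop.inv_mul_cancel_left a⁻¹ x
  rwa [inv_inv] at h

lemma inv_mul_cancel_right (a x : L) : (x * a⁻¹) * a = x := by
  have h := IPLoop.mul_inv_cancel_right a⁻¹ x
  rwa [inv_inv] at h

lemma mul_left_cancel {a x y : L} (h : a * x = a * y) : x = y := by
  have := congrArg (fun t => a⁻¹ * t) h
  simpa only [IPLoop.inv_mul_cancel_left] using this

lemma mul_right_cancel {a x y : L} (h : x * a = y * a) : x = y := by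
  have := congrArg (fun t => t * a⁻¹) h
  simpa only [IPLoop.mul_inv_cancel_right] using this

lemma one_inv : (1 : L)⁻¹ = 1 := by
  have h := IPLoop.inv_mul_cancel_left (1 : L) 1
  rwa [IPLoop.one_mul, IPLoop.mul_one] at h

lemma eq_inv_of_mul_eq_one {a b : L} (h : a * b = 1) : b = a⁻¹ := by
  have h2 : a⁻¹ * (a * b) = b := IPLoop.inv_mul_cancel_left a b
  rw [h, IPLoop.mul_one] at h2
  exact h2.symm

lemma inv_eq_of_mul_eq_one {a b : L} (h : a * b = 1) : a = b⁻¹ := by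
  have h2 : (a * b) * b⁻¹ = a := IPLoop.mul_inv_cancel_right b a
  rw [h, IPLoop.one_mul] at h2
  exact h2.symm

lemma eq_of_inv_mul_eq_one {a b : L} (h : a⁻¹ * b = 1) : b = a := by
  have := eq_inv_of_mul_eq_one h
  rwa [inv_inv] at this

lemma unique_compl {a b c : L} (h1 : a * b = 1) (h2 : a * c = 1) : b = c := by
  rw [eq_inv_of_mul_eq_one h1, eq_inv_of_mul_eq_one h2]

lemma mul_inv_rev (a b : L) : (a * b)⁻¹ = b⁻¹ * a⁻¹ := by
  have h1 : (a * b)⁻¹ * ((a * b) * b⁻¹) = b⁻¹ := IPLoop.inv_mul_cancel_left _ _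
  rw [IPLoop.mul_inv_cancel_right] at h1
  have h2 : ((a * b)⁻¹ * a) * a⁻¹ = (a * b)⁻¹ := IPLoop.mul_inv_cancel_right _ _
  rw [h1] at h2
  exact h2.symm

lemma pow_zero (c : L) : c ^ (0 : ℕ) = 1 := rfl
lemma pow_succ (c : L) (n : ℕ) : c ^ (n + 1) = c * c ^ n := rfl
lemma pow_one (c : L) : c ^ (1 : ℕ) = c := by
  rw [pow_succ, pow_zero, IPLoop.mul_one]
lemma one_pow (n : ℕ) : (1 : L) ^ n = 1 := by
  induction n with
  | zero => rfl
  | succ n ih => rw [pow_succ, ih, IPLoop.mul_one]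

lemma comm_spec (x y : L) : (x * y) * IPLoop.comm y x = y * x := by
  unfold IPLoop.comm; exact mul_inv_cancel_left _ _

lemma assoc_spec (x y w : L) : (x * (y * w)) * assoc x y w = (x * y) * w := by
  unfold assoc; exact mul_inv_cancel_left _ _

lemma assoc_eq_one_iff {x y w : L} : assoc x y w = 1 ↔ (x * y) * w = x * (y * w) := by
  constructor
  · intro h
    have := assoc_spec x y w
    rw [h, IPLoop.mul_one] at this
    exact this.symm
  · intro h
    unfold assoc
    rw [← h]
    exact inv_mul_self _

lemma comm_eq_one_iff {x y : L} : IPLoop.comm x y = 1 ↔ y * x = x * y := by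
  constructor
  · intro h
    have hs := comm_spec y x
    rw [h, IPLoop.mul_one] at hs
    exact hs
  · intro h
    unfold IPLoop.comm
    rw [h]
    exact inv_mul_self _

-- vanishing associators from IP
lemma assoc_one_left (y w : L) : assoc 1 y w = 1 := by
  rw [assoc_eq_one_iff, IPLoop.one_mul, IPLoop.one_mul]
lemma assoc_one_mid (x w : L) : assoc x 1 w = 1 := by
  rw [assoc_eq_one_iff, IPLoop.mul_one, IPLoop.one_mul]
lemma assoc_one_right (x y : L) : assoc x y 1 = 1 := by
  rw [assoc_eq_one_iff, IPLoop.mul_one, IPLoop.mul_one]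
lemma assoc_mul_inv (a b : L) : assoc a b b⁻¹ = 1 := by
  rw [assoc_eq_one_iff, IPLoop.mul_inv_cancel_right, mul_inv_self, IPLoop.mul_one]
lemma assoc_inv_mul (a b : L) : assoc a b⁻¹ b = 1 := by
  rw [assoc_eq_one_iff, inv_mul_cancel_right, inv_mul_self, IPLoop.mul_one]
lemma assoc_self_inv (b w : L) : assoc b b⁻¹ w = 1 := by
  rw [assoc_eq_one_iff, mul_inv_self, IPLoop.one_mul, mul_inv_cancel_left]
lemma assoc_inv_self (b w : L) : assoc b⁻¹ b w = 1 := by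
  rw [assoc_eq_one_iff, inv_mul_self, IPLoop.one_mul, IPLoop.inv_mul_cancel_left]

-- center calculus
lemma ctr_comm {z : L} (h : inCenter z) (x : L) : z * x = x * z := by
  have := h.1 x
  rw [comm_eq_one_iff] at this
  exact this.symm

lemma ctr_a1 {z : L} (h : inCenter z) (x y : L) : (z * x) * y = z * (x * y) :=
  assoc_eq_one_iff.mp (h.2 x y).1
lemma ctr_a2 {z : L} (h : inCenter z) (x y : L) : (x * z) * y = x * (z * y) :=
  assoc_eq_one_iff.mp (h.2 x y).2.1
lemma ctr_a3 {z : L} (h : inCenter z) (x y : L) : (x * y) * z = x * (y * z) :=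
  assoc_eq_one_iff.mp (h.2 x y).2.2

lemma slideR {z : L} (h : inCenter z) (x y : L) : (x * z) * y = (x * y) * z := by
  rw [ctr_a2 h, ctr_comm h, ← ctr_a3 h]
lemma slideM {z : L} (h : inCenter z) (a b : L) : a * (b * z) = (a * b) * z :=
  (ctr_a3 h a b).symm
lemma slideL {z : L} (h : inCenter z) (x y : L) : x * (z * y) = z * (x * y) := by
  calc x * (z * y) = x * (y * z) := by rw [ctr_comm h y]
    _ = (x * y) * z := (slideM h x y)
    _ = z * (x * y) := (ctr_comm h (x*y)).symm

lemma mk_center {z : L} (hc : ∀ x : L, z * x = x * z)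
    (h1 : ∀ x y : L, (z * x) * y = z * (x * y))
    (h2 : ∀ x y : L, (x * z) * y = x * (z * y))
    (h3 : ∀ x y : L, (x * y) * z = x * (y * z)) : inCenter z :=
  ⟨fun x => comm_eq_one_iff.mpr (hc x).symm,
   fun x y => ⟨assoc_eq_one_iff.mpr (h1 x y), assoc_eq_one_iff.mpr (h2 x y),
     assoc_eq_one_iff.mpr (h3 x y)⟩⟩

lemma ctr_one : inCenter (1 : L) := by
  apply mk_center
  · intro x; rw [IPLoop.one_mul, IPLoop.mul_one]
  · intro x y; rw [IPLoop.one_mul, IPLoop.one_mul]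
  · intro x y; rw [IPLoop.mul_one, IPLoop.one_mul]
  · intro x y; rw [IPLoop.mul_one, IPLoop.mul_one]

lemma ctr_mul {z w : L} (hz : inCenter z) (hw : inCenter w) : inCenter (z * w) := by
  apply mk_center
  · intro x
    calc (z * w) * x = z * (w * x) := ctr_a1 hz w x
      _ = z * (x * w) := by rw [ctr_comm hw x]
      _ = (z * x) * w := (ctr_a1 hz x w).symm
      _ = (x * z) * w := by rw [ctr_comm hz x]
      _ = x * (z * w) := ctr_a2 hz x w
  · intro x y
    calc ((z * w) * x) * y = (z * (w * x)) * y := by rw [ctr_a1 hz w x]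
      _ = z * ((w * x) * y) := ctr_a1 hz _ y
      _ = z * (w * (x * y)) := by rw [ctr_a1 hw x y]
      _ = (z * w) * (x * y) := (ctr_a1 hz w _).symm
  · intro x y
    calc (x * (z * w)) * y = ((x * z) * w) * y := by rw [ctr_a2 hz x w]
      _ = (x * z) * (w * y) := ctr_a2 hw _ y
      _ = x * (z * (w * y)) := ctr_a2 hz x _
      _ = x * ((z * w) * y) := by rw [ctr_a1 hz w y]
  · intro x y
    calc (x * y) * (z * w) = ((x * y) * z) * w := slideM hw (x*y) z
      _ = (x * (y * z)) * w := by rw [ctr_a3 hz x y]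
      _ = x * ((y * z) * w) := ctr_a3 hw x _
      _ = x * (y * (z * w)) := by rw [← slideM hw y z]

lemma ctr_inv {z : L} (hz : inCenter z) : inCenter z⁻¹ := by
  have hcomm : ∀ x : L, z⁻¹ * x = x * z⁻¹ := by
    intro x
    apply mul_left_cancel (a := z)
    calc z * (z⁻¹ * x) = x := mul_inv_cancel_left z x
      _ = (x * z) * z⁻¹ := (IPLoop.mul_inv_cancel_right z x).symm
      _ = (z * x) * z⁻¹ := by rw [ctr_comm hz x]
      _ = z * (x * z⁻¹) := ctr_a1 hz x z⁻¹
  have ha1 : ∀ x y : L, (z⁻¹ * x) * y = z⁻¹ * (x * y) := by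
    intro x y
    apply mul_left_cancel (a := z)
    calc z * ((z⁻¹ * x) * y) = (z * (z⁻¹ * x)) * y := (ctr_a1 hz _ y).symm
      _ = x * y := by rw [mul_inv_cancel_left z x]
      _ = z * (z⁻¹ * (x * y)) := (mul_inv_cancel_left z _).symm
  have ha2 : ∀ x y : L, (x * z⁻¹) * y = x * (z⁻¹ * y) := by
    intro x y
    have hL : (x * z⁻¹) * y = z⁻¹ * (x * y) := by
      rw [← hcomm x]; exact ha1 x y
    have hR : x * (z⁻¹ * y) = z⁻¹ * (x * y) := by
      apply mul_left_cancel (a := z)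
      calc z * (x * (z⁻¹ * y)) = (z * x) * (z⁻¹ * y) := (ctr_a1 hz x _).symm
        _ = (x * z) * (z⁻¹ * y) := by rw [ctr_comm hz x]
        _ = x * (z * (z⁻¹ * y)) := ctr_a2 hz x _
        _ = x * y := by rw [mul_inv_cancel_left z y]
        _ = z * (z⁻¹ * (x * y)) := (mul_inv_cancel_left z _).symm
    rw [hL, hR]
  have ha3 : ∀ x y : L, (x * y) * z⁻¹ = x * (y * z⁻¹) := by
    intro x y
    calc (x * y) * z⁻¹ = z⁻¹ * (x * y) := (hcomm (x*y)).symm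
      _ = (z⁻¹ * x) * y := (ha1 x y).symm
      _ = (x * z⁻¹) * y := by rw [hcomm x]
      _ = x * (z⁻¹ * y) := ha2 x y
      _ = x * (y * z⁻¹) := by rw [hcomm y]
  exact mk_center hcomm ha1 ha2 ha3

lemma ctr_pow {z : L} (hz : inCenter z) (n : ℕ) : inCenter (z ^ n) := by
  induction n with
  | zero => exact ctr_one
  | succ n ih => rw [pow_succ]; exact ctr_mul hz ih

lemma mul_central_inv {z : L} (hz : inCenter z) (X : L) : (X * z)⁻¹ = X⁻¹ * z⁻¹ := by
  rw [mul_inv_rev, ctr_comm (ctr_inv hz) X⁻¹]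

lemma inv_mul_div {z : L} (hz : inCenter z) (a b : L) :
    (a * z)⁻¹ * (b * z) = a⁻¹ * b := by
  rw [mul_central_inv hz]
  calc (a⁻¹ * z⁻¹) * (b * z) = a⁻¹ * (z⁻¹ * (b * z)) := ctr_a2 (ctr_inv hz) a⁻¹ _
    _ = a⁻¹ * (z⁻¹ * (z * b)) := by rw [ctr_comm hz b]
    _ = a⁻¹ * b := by rw [IPLoop.inv_mul_cancel_left]

-- insensitivity of associator to central factors
lemma assoc_insens3 {z : L} (hz : inCenter z) (x y w : L) :
    assoc x y (w * z) = assoc x y w := by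
  unfold assoc
  have h1 : x * (y * (w * z)) = (x * (y * w)) * z := by
    rw [slideM hz y w, slideM hz x (y*w)]
  have h2 : (x * y) * (w * z) = ((x * y) * w) * z := slideM hz (x*y) w
  rw [h1, h2, inv_mul_div hz]

lemma assoc_insens2 {z : L} (hz : inCenter z) (x y w : L) :
    assoc x (y * z) w = assoc x y w := by
  unfold assoc
  have h1 : x * ((y * z) * w) = (x * (y * w)) * z := by
    rw [slideR hz y w, slideM hz x (y*w)]
  have h2 : (x * (y * z)) * w = ((x * y) * w) * z := by
    rw [slideM hz x y, slideR hz (x*y) w]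
  rw [h1, h2, inv_mul_div hz]

lemma assoc_insens1 {z : L} (hz : inCenter z) (x y w : L) :
    assoc (x * z) y w = assoc x y w := by
  unfold assoc
  have h1 : (x * z) * (y * w) = (x * (y * w)) * z := slideR hz x (y*w)
  have h2 : ((x * z) * y) * w = ((x * y) * w) * z := by
    rw [slideR hz x y, slideR hz (x*y) w]
  rw [h1, h2, inv_mul_div hz]

section ClassTwoSec

-- the "class-two equivalence": equal up to a central factor
def ceq (x y : L) : Prop := ∃ z : L, inCenter z ∧ y = x * z

lemma ceq_refl (x : L) : ceq x x := ⟨1, ctr_one, (IPLoop.mul_one x).symm⟩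
lemma ceq_symm {x y : L} (h : ceq x y) : ceq y x := by
  obtain ⟨z, hz, rfl⟩ := h
  exact ⟨z⁻¹, ctr_inv hz, (IPLoop.mul_inv_cancel_right z x).symm⟩
lemma ceq_trans {x y w : L} (h1 : ceq x y) (h2 : ceq y w) : ceq x w := by
  obtain ⟨z, hz, rfl⟩ := h1
  obtain ⟨z', hz', rfl⟩ := h2
  exact ⟨z * z', ctr_mul hz hz', ctr_a3 hz' x z⟩

lemma ceq_comm (h2 : ClassTwo L) (x y : L) : ceq (x * y) (y * x) :=
  ⟨IPLoop.comm y x, h2.1 y x, (comm_spec x y).symm⟩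

lemma ceq_assoc (h2 : ClassTwo L) (x y w : L) : ceq (x * (y * w)) ((x * y) * w) :=
  ⟨assoc x y w, h2.2 x y w, (assoc_spec x y w).symm⟩

lemma ceq_mul_left {a b : L} (u : L) (h : ceq a b) : ceq (u * a) (u * b) := by
  obtain ⟨z, hz, rfl⟩ := h
  exact ⟨z, hz, slideM hz u a⟩

lemma assoc_ceq3 {a b : L} (h : ceq a b) (x y : L) : assoc x y a = assoc x y b := by
  obtain ⟨z, hz, rfl⟩ := h
  exact (assoc_insens3 hz x y a).symm

lemma assoc_ceq1 {a b : L} (h : ceq a b) (x y : L) : assoc a x y = assoc b x y := by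
  obtain ⟨z, hz, rfl⟩ := h
  exact (assoc_insens1 hz a x y).symm

-- the cocycle identity
lemma CO (h2 : ClassTwo L) (x y z w : L) :
    assoc x y (z * w) * assoc (x * y) z w
      = (assoc y z w * assoc x (y * z) w) * assoc x y z := by
  have e2 : ((x * y) * z) * w = ((x * (y * z)) * w) * assoc x y z := by
    rw [← slideR (h2.2 x y z) _ w, assoc_spec]
  have e5 : x * ((y * z) * w) = (x * (y * (z * w))) * assoc y z w := by
    rw [← slideM (h2.2 y z w) x, assoc_spec]
  have hA : ((x * y) * z) * w
      = (((x * (y * (z * w))) * assoc y z w) * assoc x (y * z) w) * assoc x y z := by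
    rw [e2, ← e5, assoc_spec]
  have hB : ((x * y) * z) * w
      = ((x * (y * (z * w))) * assoc x y (z * w)) * assoc (x * y) z w := by
    rw [assoc_spec, assoc_spec]
  set X := x * (y * (z * w)) with hX
  have hEq : (X * assoc x y (z * w)) * assoc (x * y) z w
      = ((X * assoc y z w) * assoc x (y * z) w) * assoc x y z := by
    rw [← hB, hA]
  have hL : (X * assoc x y (z * w)) * assoc (x * y) z w
      = X * (assoc x y (z * w) * assoc (x * y) z w) := ctr_a3 (h2.2 (x*y) z w) X _
  have hR : ((X * assoc y z w) * assoc x (y * z) w) * assoc x y z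
      = X * ((assoc y z w * assoc x (y * z) w) * assoc x y z) := by
    rw [ctr_a3 (h2.2 x (y*z) w) X _, ctr_a3 (h2.2 x y z) X _]
  apply mul_left_cancel (a := X)
  rw [← hL, ← hR, hEq]

lemma E7L (h2 : ClassTwo L) (x y z : L) :
    assoc x (y * z) z⁻¹ * assoc x y z = 1 := by
  have h := CO h2 x y z z⁻¹
  rw [mul_inv_self, assoc_one_right, IPLoop.one_mul, assoc_mul_inv,
    assoc_mul_inv, IPLoop.one_mul] at h
  exact h.symm

lemma L4 (h2 : ClassTwo L) (x y c : L) :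
    assoc x (y * c⁻¹) c * assoc x y c⁻¹ = 1 := by
  have h := CO h2 x y c⁻¹ c
  rw [inv_mul_self, assoc_one_right, IPLoop.one_mul, assoc_inv_mul,
    assoc_inv_mul, IPLoop.one_mul] at h
  exact h.symm

lemma E2L (h2 : ClassTwo L) (x y c : L) :
    assoc x y c * assoc (x * y) y⁻¹ (y * c) = 1 := by
  have h := CO h2 x y y⁻¹ (y * c)
  rw [IPLoop.inv_mul_cancel_left, assoc_self_inv, mul_inv_self, assoc_one_mid,
    assoc_mul_inv] at h
  simp only [IPLoop.one_mul, IPLoop.mul_one] at h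
  exact h

lemma Pstar (hM : IsMoufang L) (h2 : ClassTwo L) (c d e : L) :
    assoc d c (e * c) * assoc (d * c) e c = 1 := by
  have hm := hM c d e
  have hA : ((d * c) * e) * c
      = (d * (c * (e * c))) * (assoc d c (e * c) * assoc (d * c) e c) := by
    rw [← ctr_a3 (h2.2 (d*c) e c) _ _, assoc_spec, assoc_spec]
  rw [hm] at hA
  have : (d * (c * (e * c))) * 1
      = (d * (c * (e * c))) * (assoc d c (e * c) * assoc (d * c) e c) := by
    rw [IPLoop.mul_one]; exact hA
  exact (mul_left_cancel this).symm

lemma T1L (hM : IsMoufang L) (h2 : ClassTwo L) (d c z : L) :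
    assoc d c z = assoc (d * c) z c⁻¹ := by
  have h1 := Pstar hM h2 c d (z * c⁻¹)
  rw [inv_mul_cancel_right] at h1
  have h2' := L4 h2 (d * c) z c
  have e1 : assoc (d * c) (z * c⁻¹) c = (assoc d c z)⁻¹ := eq_inv_of_mul_eq_one h1
  rw [e1] at h2'
  exact (eq_of_inv_mul_eq_one h2').symm

lemma INVL (h2 : ClassTwo L) (u v w : L) :
    assoc u v w = assoc w⁻¹ v⁻¹ u⁻¹ := by
  have hA : (u * v) * w = (u * (v * w)) * assoc u v w := (assoc_spec u v w).symm
  have hinv : ((u * v) * w)⁻¹ = ((u * (v * w)))⁻¹ * (assoc u v w)⁻¹ :=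
    hA ▸ mul_central_inv (h2.2 u v w) _
  rw [mul_inv_rev (u*v) w, mul_inv_rev u v, mul_inv_rev u (v*w), mul_inv_rev v w] at hinv
  -- hinv : w⁻¹ * (v⁻¹ * u⁻¹) = ((w⁻¹ * v⁻¹) * u⁻¹) * (assoc u v w)⁻¹
  have hB : (w⁻¹ * v⁻¹) * u⁻¹ = (w⁻¹ * (v⁻¹ * u⁻¹)) * assoc w⁻¹ v⁻¹ u⁻¹ :=
    (assoc_spec w⁻¹ v⁻¹ u⁻¹).symm
  rw [hB] at hinv
  rw [ctr_a3 (ctr_inv (h2.2 u v w)) _ _] at hinv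
  have h1 : (w⁻¹ * (v⁻¹ * u⁻¹)) * 1
      = (w⁻¹ * (v⁻¹ * u⁻¹)) * (assoc w⁻¹ v⁻¹ u⁻¹ * (assoc u v w)⁻¹) := by
    rw [IPLoop.mul_one]; exact hinv
  have h3 := (mul_left_cancel h1).symm
  have h4 := inv_eq_of_mul_eq_one h3
  rw [inv_inv] at h4
  exact h4.symm

lemma E21L (hM : IsMoufang L) (h2 : ClassTwo L) (u v w : L) :
    assoc u v w = assoc u v (v * w) := by
  have h1 : assoc u (v * w) w⁻¹ * assoc u v w = 1 := E7L h2 u v w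
  have h2' : assoc u (v * w) w⁻¹ * assoc (u * (v * w)) (v * w)⁻¹ v = 1 := by
    have h := E2L h2 u (v * w) w⁻¹
    rwa [IPLoop.mul_inv_cancel_right] at h
  have e1 : assoc u v w = assoc (u * (v * w)) (v * w)⁻¹ v := unique_compl h1 h2'
  have e2 : assoc (u * (v * w)) (v * w)⁻¹ v
      = assoc ((u * (v * w)) * (v * w)⁻¹) v ((v * w)⁻¹)⁻¹ := T1L hM h2 _ _ _
  rw [IPLoop.mul_inv_cancel_right, inv_inv] at e2
  rw [e1, e2]

lemma E01L (hM : IsMoufang L) (h2 : ClassTwo L) (u v w : L) :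
    assoc u v w = assoc (u * v) v w := by
  have h1 : assoc u v w = assoc w⁻¹ v⁻¹ u⁻¹ := INVL h2 u v w
  have h2' : assoc w⁻¹ v⁻¹ u⁻¹ = assoc w⁻¹ v⁻¹ (v⁻¹ * u⁻¹) := E21L hM h2 _ _ _
  rw [← mul_inv_rev u v] at h2'
  have h3 : assoc (u * v) v w = assoc w⁻¹ v⁻¹ (u * v)⁻¹ := INVL h2 _ _ _
  rw [h1, h2', ← h3]

lemma R2L (hM : IsMoufang L) (h2 : ClassTwo L) (u v w : L) :
    assoc u v w = (assoc (u * w) v w⁻¹)⁻¹ := by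
  have s1 : assoc u v w = (assoc u (v * w) w⁻¹)⁻¹ := by
    exact eq_inv_of_mul_eq_one (E7L h2 u v w)
  have s2 : assoc u (v * w) w⁻¹ = assoc u (v * w) v := by
    have h := E21L hM h2 u (v * w) w⁻¹
    rwa [IPLoop.mul_inv_cancel_right] at h
  have s3 : assoc u (v * w) v = assoc (u * (v * w)) v (v * w)⁻¹ := T1L hM h2 u (v*w) v
  have s4 : assoc (u * (v * w)) v (v * w)⁻¹ = assoc ((u * w) * v) v (v * w)⁻¹ := by
    apply assoc_ceq1
    exact ceq_trans (ceq_mul_left u (ceq_comm h2 v w)) (ceq_assoc h2 u w v)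
  have s5 : assoc ((u * w) * v) v (v * w)⁻¹ = assoc (u * w) v (v * w)⁻¹ :=
    (E01L hM h2 (u * w) v ((v * w)⁻¹)).symm
  have s6 : assoc (u * w) v (v * w)⁻¹ = assoc (u * w) v w⁻¹ := by
    have c1 : ceq (v * (v * w)⁻¹) w⁻¹ := by
      rw [mul_inv_rev v w]
      exact ceq_trans (ceq_comm h2 v (w⁻¹ * v⁻¹))
        (by rw [inv_mul_cancel_right]; exact ceq_refl w⁻¹)
    have h := E21L hM h2 (u * w) v ((v * w)⁻¹)
    rw [h]
    exact assoc_ceq3 c1 (u * w) v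
  rw [s1, s2, s3, s4, s5, s6]

lemma skew23 (hM : IsMoufang L) (h2 : ClassTwo L) (u v w : L) :
    assoc u v w = (assoc u w v)⁻¹ := by
  have t1 : assoc u v w = assoc (u * v) w v⁻¹ := T1L hM h2 u v w
  have t2 : assoc (u * v) w v⁻¹ = (assoc ((u * v) * v⁻¹) w (v⁻¹)⁻¹)⁻¹ := R2L hM h2 _ _ _
  rw [IPLoop.mul_inv_cancel_right, inv_inv] at t2
  rw [t1, t2]

lemma skew12 (hM : IsMoufang L) (h2 : ClassTwo L) (u v w : L) :
    assoc u v w = (assoc v u w)⁻¹ := by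
  have h1 : assoc u v w = assoc w⁻¹ v⁻¹ u⁻¹ := INVL h2 u v w
  have h2' : assoc w⁻¹ v⁻¹ u⁻¹ = (assoc w⁻¹ u⁻¹ v⁻¹)⁻¹ := skew23 hM h2 _ _ _
  have h3 : assoc v u w = assoc w⁻¹ u⁻¹ v⁻¹ := INVL h2 v u w
  rw [h1, h2', ← h3]

lemma skew13 (hM : IsMoufang L) (h2 : ClassTwo L) (u v w : L) :
    assoc u v w = (assoc w v u)⁻¹ := by
  rw [skew12 hM h2 u v w, skew23 hM h2 v u w, skew12 hM h2 v w u]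
  rw [inv_inv]

lemma E02L (hM : IsMoufang L) (h2 : ClassTwo L) (u v w : L) :
    assoc (u * w) v w = assoc u v w := by
  rw [skew23 hM h2 (u*w) v w, ← E01L hM h2 u w v, ← skew23 hM h2 u v w]

lemma E20L (hM : IsMoufang L) (h2 : ClassTwo L) (u v w : L) :
    assoc u v (u * w) = assoc u v w := by
  rw [skew13 hM h2 u v (u*w), skew13 hM h2 u v w]
  congr 1
  have h1 : assoc (u * w) v u = assoc (w * u) v u := assoc_ceq1 (ceq_comm h2 u w) v u
  rw [h1, E02L hM h2 w v u]

lemma E10L (hM : IsMoufang L) (h2 : ClassTwo L) (u v w : L) :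
    assoc u (u * v) w = assoc u v w := by
  rw [skew12 hM h2 u (u*v) w, skew12 hM h2 u v w]
  congr 1
  have h1 : assoc (u * v) u w = assoc (v * u) u w := assoc_ceq1 (ceq_comm h2 u v) u w
  rw [h1, ← E01L hM h2 v u w]

-- flexibility and power associativity
lemma flex (hM : IsMoufang L) (a b : L) : (a * b) * a = a * (b * a) := by
  have h := hM a 1 b
  rwa [IPLoop.one_mul, IPLoop.one_mul] at h

lemma pow_mul_comm (hM : IsMoufang L) (c : L) (n : ℕ) : c ^ n * c = c * c ^ n := by
  induction n with
  | zero => rw [pow_zero, IPLoop.one_mul, IPLoop.mul_one]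
  | succ n ih =>
    rw [pow_succ, flex hM c (c ^ n), ih]

lemma pow_add (hM : IsMoufang L) (c : L) (m n : ℕ) : c ^ m * c ^ n = c ^ (m + n) := by
  suffices H : ∀ n : ℕ, (∀ m : ℕ, c ^ m * c ^ n = c ^ (m + n)) ∧
      (∀ m : ℕ, c ^ m * c ^ (n+1) = c ^ (m + n + 1)) by
    exact (H n).1 m
  intro n
  induction n with
  | zero =>
    constructor
    · intro m; rw [pow_zero, IPLoop.mul_one, Nat.add_zero]
    · intro m
      rw [pow_one, pow_mul_comm hM, ← pow_succ]
  | succ n ih =>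
    refine ⟨ih.2, ?_⟩
    intro m
    have key : c ^ m * (c * (c ^ n * c)) = ((c ^ m * c) * c ^ n) * c := (hM c (c ^ m) (c ^ n)).symm
    rw [pow_mul_comm hM c n, ← pow_succ, ← pow_succ] at key
    -- key : c ^ m * c ^ (n+2) = ((c ^ m * c) * c ^ n) * c
    rw [pow_mul_comm hM c m, ← pow_succ, ih.1 (m+1), pow_mul_comm hM, ← pow_succ] at key
    rw [key]
    congr 1
    omega

lemma pow_mul (hM : IsMoufang L) (c : L) (m n : ℕ) : c ^ (m * n) = (c ^ m) ^ n := by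
  induction n with
  | zero => rw [Nat.mul_zero, pow_zero, pow_zero]
  | succ n ih =>
    rw [pow_succ, ← ih, pow_add hM, Nat.mul_succ]
    congr 1
    omega

lemma inv_pow (hM : IsMoufang L) (c : L) (n : ℕ) : (c⁻¹) ^ n = (c ^ n)⁻¹ := by
  induction n with
  | zero => rw [pow_zero, pow_zero, one_inv]
  | succ n ih =>
    rw [pow_succ, ih, ← mul_inv_rev, pow_mul_comm hM, ← pow_succ]

lemma pow_eq_one_of_dvd (hM : IsMoufang L) {c : L} {m n : ℕ} (h : c ^ m = 1)
    (hd : m ∣ n) : c ^ n = 1 := by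
  obtain ⟨t, rfl⟩ := hd
  rw [pow_mul hM, h, one_pow]

-- vanishing families
lemma famA4 (hM : IsMoufang L) (h2 : ClassTwo L) (x y : L) (n : ℕ) :
    assoc x y (y ^ n) = 1 := by
  induction n with
  | zero => exact assoc_one_right x y
  | succ n ih => rw [pow_succ, ← E21L hM h2]; exact ih

lemma famA2 (hM : IsMoufang L) (h2 : ClassTwo L) (x y : L) (n : ℕ) :
    assoc x y (x ^ n) = 1 := by
  induction n with
  | zero => exact assoc_one_right x y
  | succ n ih => rw [pow_succ, E20L hM h2]; exact ih

lemma famA3 (hM : IsMoufang L) (h2 : ClassTwo L) (x y : L) (n : ℕ) :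
    assoc x (x ^ n) y = 1 := by
  induction n with
  | zero => exact assoc_one_mid x y
  | succ n ih => rw [pow_succ, E10L hM h2]; exact ih

lemma famG1 (hM : IsMoufang L) (h2 : ClassTwo L) (x y : L) (m n : ℕ) :
    assoc x y (x ^ m * y ^ n) = 1 := by
  induction m with
  | zero => rw [pow_zero, IPLoop.one_mul]; exact famA4 hM h2 x y n
  | succ m ih =>
    have hc : ceq (x * (x ^ m * y ^ n)) ((x * x ^ m) * y ^ n) := ceq_assoc h2 _ _ _
    rw [pow_succ, ← assoc_ceq3 hc x y, E20L hM h2]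
    exact ih

lemma comm_pow (hM : IsMoufang L) (h2 : ClassTwo L) (x y : L) (n : ℕ) :
    y * x ^ n = (x ^ n * y) * (IPLoop.comm y x) ^ n := by
  set k := IPLoop.comm y x with hk
  have hkc : inCenter k := h2.1 y x
  induction n with
  | zero =>
    rw [pow_zero, pow_zero, IPLoop.mul_one, IPLoop.one_mul, IPLoop.mul_one]
  | succ n ih =>
    have hkcn : inCenter (k ^ n) := ctr_pow hkc n
    calc y * x ^ (n+1) = y * (x * x ^ n) := by rw [pow_succ]
      _ = (y * x) * x ^ n := (assoc_eq_one_iff.mp (famA4 hM h2 y x n)).symm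
      _ = ((x * y) * k) * x ^ n := by rw [comm_spec x y]
      _ = ((x * y) * x ^ n) * k := slideR hkc (x*y) (x^n)
      _ = (x * (y * x ^ n)) * k := by rw [assoc_eq_one_iff.mp (famA2 hM h2 x y n)]
      _ = (x * ((x ^ n * y) * k ^ n)) * k := by rw [ih]
      _ = ((x * (x ^ n * y)) * k ^ n) * k := by rw [slideM hkcn x _]
      _ = (((x * x ^ n) * y) * k ^ n) * k := by
            rw [assoc_eq_one_iff.mp (famA3 hM h2 x y n)]
      _ = ((x ^ (n+1) * y) * k ^ n) * k := by rw [pow_succ]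
      _ = (x ^ (n+1) * y) * (k ^ n * k) := ctr_a3 hkc _ _
      _ = (x ^ (n+1) * y) * k ^ (n+1) := by rw [pow_mul_comm hM k n, ← pow_succ]

def Texp : ℕ → ℕ
  | 0 => 0
  | n + 1 => Texp n + n

lemma main_pow (hM : IsMoufang L) (h2 : ClassTwo L) (x y : L) (n : ℕ) :
    (x * y) ^ n = (x ^ n * y ^ n) * (IPLoop.comm y x) ^ (Texp n) := by
  set k := IPLoop.comm y x with hk
  have hkc : inCenter k := h2.1 y x
  induction n with
  | zero =>
    show (1 : L) = ((1 : L) * 1) * k ^ (Texp 0)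
    rw [IPLoop.mul_one]
    show (1 : L) = 1 * k ^ 0
    rw [pow_zero, IPLoop.mul_one]
  | succ n ih =>
    have hkT : inCenter (k ^ (Texp n)) := ctr_pow hkc (Texp n)
    have hkn : inCenter (k ^ n) := ctr_pow hkc n
    have step1 : y * (x ^ n * y ^ n) = (x ^ n * y ^ (n+1)) * k ^ n := by
      calc y * (x ^ n * y ^ n) = (y * x ^ n) * y ^ n :=
            (assoc_eq_one_iff.mp (famA2 hM h2 y (x ^ n) n)).symm
        _ = ((x ^ n * y) * k ^ n) * y ^ n := by rw [comm_pow hM h2 x y n]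
        _ = ((x ^ n * y) * y ^ n) * k ^ n := slideR hkn _ _
        _ = (x ^ n * (y * y ^ n)) * k ^ n := by
              rw [assoc_eq_one_iff.mp (famA4 hM h2 (x ^ n) y n)]
        _ = (x ^ n * y ^ (n+1)) * k ^ n := by rw [pow_succ]
    calc (x * y) ^ (n+1) = (x * y) * ((x * y) ^ n) := pow_succ (x*y) n
      _ = (x * y) * ((x ^ n * y ^ n) * k ^ (Texp n)) := by rw [ih]
      _ = ((x * y) * (x ^ n * y ^ n)) * k ^ (Texp n) := slideM hkT _ _
      _ = (x * (y * (x ^ n * y ^ n))) * k ^ (Texp n) := by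
            rw [assoc_eq_one_iff.mp (famG1 hM h2 x y n n)]
      _ = (x * ((x ^ n * y ^ (n+1)) * k ^ n)) * k ^ (Texp n) := by rw [step1]
      _ = ((x * (x ^ n * y ^ (n+1))) * k ^ n) * k ^ (Texp n) := by rw [slideM hkn x _]
      _ = (((x * x ^ n) * y ^ (n+1)) * k ^ n) * k ^ (Texp n) := by
            rw [assoc_eq_one_iff.mp (famA3 hM h2 x (y ^ (n+1)) n)]
      _ = ((x ^ (n+1) * y ^ (n+1)) * k ^ n) * k ^ (Texp n) := by rw [← pow_succ x n]
      _ = (x ^ (n+1) * y ^ (n+1)) * (k ^ n * k ^ (Texp n)) := ctr_a3 hkT _ _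
      _ = (x ^ (n+1) * y ^ (n+1)) * k ^ (Texp (n+1)) := by
            rw [pow_add hM k n (Texp n), Nat.add_comm n (Texp n)]
            rfl

end ClassTwoSec

lemma texp_eq (n : ℕ) : 2 * Texp n + n = n * n := by
  induction n with
  | zero => rfl
  | succ n ih =>
    have hs : Texp (n+1) = Texp n + n := rfl
    have expand : (n+1) * (n+1) = n*n + 2*n + 1 := by ring
    omega

lemma q_dvd_texp {q : ℕ} (hq : 0 < q) : q ∣ Texp (q * q) := by
  set N := q * q with hN
  have hN1 : 0 < N := Nat.mul_pos hq hq
  obtain ⟨M, hM⟩ : ∃ M, N = M + 1 := ⟨N - 1, by omega⟩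
  have h2T : 2 * Texp N = M * N := by
    have h := texp_eq N
    have hNN : N * N = M * M + 2 * M + 1 := by rw [hM]; ring
    have hMN : M * N = M * M + M := by rw [hM]; ring
    omega
  rcases Nat.even_or_odd q with he | ho
  · obtain ⟨r, hr⟩ := he
    have : 2 * Texp N = 2 * (M * (r * q)) := by
      rw [h2T, hN]
      calc M * (q * q) = M * ((r + r) * q) := by rw [← hr]
        _ = 2 * (M * (r * q)) := by ring
    have hT : Texp N = M * (r * q) := by omega
    exact ⟨M * r, by rw [hT]; ring⟩
  · have hNodd : Odd N := by rw [hN]; exact ho.mul ho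
    obtain ⟨t, ht⟩ := hNodd
    have hMeven : M = 2 * t := by omega
    have : 2 * Texp N = 2 * (t * N) := by rw [h2T, hMeven]; ring
    have hT : Texp N = t * N := by omega
    exact ⟨t * q, by rw [hT, hN]; ring⟩

-- order theory
lemma ord_pow_eq_one {c : L} {m : ℕ} (h : ordOf c = m) (hm : 0 < m) : c ^ m = 1 := by
  have hne : {n : ℕ | 0 < n ∧ c ^ n = 1}.Nonempty := by
    by_contra hvac
    rw [Set.not_nonempty_iff_eq_empty] at hvac
    have h0 : ordOf c = 0 := by rw [ordOf, hvac, Nat.sInf_empty]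
    omega
  have hmem := Nat.sInf_mem hne
  rw [ordOf] at h
  rw [h] at hmem
  exact hmem.2

lemma ordOf_dvd (hM : IsMoufang L) {c : L} {n : ℕ} (hn : 0 < n) (h : c ^ n = 1) :
    ordOf c ∣ n := by
  have hne : {m : ℕ | 0 < m ∧ c ^ m = 1}.Nonempty := ⟨n, hn, h⟩
  have hmem := Nat.sInf_mem hne
  set o := sInf {m : ℕ | 0 < m ∧ c ^ m = 1} with ho
  obtain ⟨hop, hoe⟩ := hmem
  have hdm : o * (n / o) + n % o = n := Nat.div_add_mod n o
  have hr : c ^ (n % o) = 1 := by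
    have e1 : c ^ n = c ^ (o * (n / o)) * c ^ (n % o) := by
      rw [pow_add hM, hdm]
    rw [pow_mul hM, hoe, one_pow, IPLoop.one_mul] at e1
    rw [← e1, h]
  have hr0 : n % o = 0 := by
    by_contra hne0
    have hlt : n % o < o := Nat.mod_lt n hop
    have hle : o ≤ n % o := Nat.sInf_le ⟨Nat.pos_of_ne_zero hne0, hr⟩
    omega
  show o ∣ n
  exact Nat.dvd_of_mod_eq_zero hr0

lemma ordOf_one : ordOf (1 : L) = 1 := by
  have h1 : (1 : ℕ) ∈ {n : ℕ | 0 < n ∧ (1 : L) ^ n = 1} := ⟨Nat.one_pos, one_pow 1⟩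
  have hle : sInf {n : ℕ | 0 < n ∧ (1 : L) ^ n = 1} ≤ 1 := Nat.sInf_le h1
  have hge : 1 ≤ sInf {n : ℕ | 0 < n ∧ (1 : L) ^ n = 1} :=
    (Nat.sInf_mem ⟨1, h1⟩).1
  rw [ordOf]
  omega

lemma ordOf_inv (hM : IsMoufang L) (c : L) : ordOf c⁻¹ = ordOf c := by
  rw [ordOf, ordOf]
  congr 1
  ext n
  simp only [Set.mem_setOf_eq]
  constructor
  · rintro ⟨hn, hpow⟩
    refine ⟨hn, ?_⟩
    rw [inv_pow hM] at hpow
    have := congrArg (fun t => t⁻¹) hpow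
    simpa [inv_inv, one_inv] using this
  · rintro ⟨hn, hpow⟩
    refine ⟨hn, ?_⟩
    rw [inv_pow hM, hpow, one_inv]

end StmtAux

open IPLoop StmtAux in
/-- In a Moufang loop of class at most 2, the set `L_p` of elements of
`p`-power order is a subloop. -/
theorem stmt3 {L : Type*} [IPLoop L] (hM : IsMoufang L) (h2 : ClassTwo L)
    (p : ℕ) (hp : p.Prime) :
    (1 : L) ∈ Lp L p ∧ (∀ c ∈ Lp L p, c⁻¹ ∈ Lp L p) ∧
      ∀ c ∈ Lp L p, ∀ d ∈ Lp L p, c * d ∈ Lp L p := by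
  refine ⟨⟨0, by rw [StmtAux.ordOf_one, _root_.pow_zero]⟩, ?_, ?_⟩
  · rintro c ⟨a, ha⟩
    exact ⟨a, by rw [StmtAux.ordOf_inv hM, ha]⟩
  · rintro c ⟨a, ha⟩ d ⟨b, hb⟩
    have hca : c ^ p ^ a = 1 := ord_pow_eq_one ha (Nat.pow_pos hp.pos)
    have hdb : d ^ p ^ b = 1 := ord_pow_eq_one hb (Nat.pow_pos hp.pos)
    set m := max a b + 1 with hm
    set q := p ^ m with hqdef
    have hq : 0 < q := (Nat.pow_pos hp.pos : 0 < p ^ m)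
    have hcq : c ^ q = 1 :=
      pow_eq_one_of_dvd hM hca (Nat.pow_dvd_pow p (by omega))
    have hdq : d ^ q = 1 :=
      pow_eq_one_of_dvd hM hdb (Nat.pow_dvd_pow p (by omega))
    set N := q * q with hNdef
    have hcN : c ^ N = 1 := pow_eq_one_of_dvd hM hcq ⟨q, rfl⟩
    have hdN : d ^ N = 1 := pow_eq_one_of_dvd hM hdq ⟨q, rfl⟩
    have hkq : (IPLoop.comm d c) ^ q = 1 := by
      have h := comm_pow hM h2 c d q
      rw [hcq, IPLoop.mul_one, IPLoop.one_mul] at h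
      have h' : d * 1 = d * (IPLoop.comm d c) ^ q := by
        rw [IPLoop.mul_one]; exact h
      exact (StmtAux.mul_left_cancel h').symm
    have hkT : (IPLoop.comm d c) ^ Texp N = 1 :=
      pow_eq_one_of_dvd hM hkq (q_dvd_texp hq)
    have hfin : (c * d) ^ N = 1 := by
      rw [main_pow hM h2 c d N, hcN, hdN, hkT, IPLoop.mul_one, IPLoop.mul_one]
    have hNpos : 0 < N := Nat.mul_pos hq hq
    have hdvd : ordOf (c * d) ∣ p ^ (m + m) := by
      have hdvd0 := ordOf_dvd hM hNpos hfin
      rwa [show N = p ^ (m + m) by rw [_root_.pow_add]] at hdvd0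
    obtain ⟨j, _, he⟩ := (Nat.dvd_prime_pow hp).mp hdvd
    exact ⟨j, he⟩
end

section
/- Let p > 3 be a prime and let L be a Moufang loop of class at most 2. Then the subloop L_p of elements of L of p-power order is associative, i.e., L_p is a group. In particular, every Moufang p-loop of class at most 2 with p > 3 is a group. -/
namespace MFP
open IPLoop

variable {L : Type*} [IPLoop L]

theorem mul_left_cancel' {a x y : L} (h : a * x = a * y) : x = y := by
  have hx := IPLoop.inv_mul_cancel_left a x
  have hy := IPLoop.inv_mul_cancel_left a y
  rw [h] at hx; rw [hx] at hy; exact hy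

theorem mul_right_cancel' {a x y : L} (h : x * a = y * a) : x = y := by
  have hx := IPLoop.mul_inv_cancel_right a x
  have hy := IPLoop.mul_inv_cancel_right a y
  rw [h] at hx; rw [hx] at hy; exact hy

theorem inv_mul' (a : L) : a⁻¹ * a = 1 := by
  have := IPLoop.inv_mul_cancel_left a 1
  rwa [IPLoop.mul_one] at this

theorem mul_inv' (a : L) : a * a⁻¹ = 1 := by
  have := IPLoop.mul_inv_cancel_right a (1 : L)
  rwa [IPLoop.one_mul] at this

theorem inv_inv' (a : L) : a⁻¹⁻¹ = a := by
  have := IPLoop.inv_mul_cancel_left a⁻¹ a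
  rwa [inv_mul' a, IPLoop.mul_one] at this

theorem mul_inv_cancel_left' (a x : L) : a * (a⁻¹ * x) = x := by
  have := IPLoop.inv_mul_cancel_left a⁻¹ x
  rwa [inv_inv'] at this

theorem inv_mul_cancel_right' (x a : L) : (x * a⁻¹) * a = x := by
  have := IPLoop.mul_inv_cancel_right a⁻¹ x
  rwa [inv_inv'] at this

theorem eq_of_inv_mul_eq_one {u v : L} (h : u⁻¹ * v = 1) : v = u := by
  have := mul_inv_cancel_left' u v
  rw [h, IPLoop.mul_one] at this; exact this.symm

theorem eq_inv_of_mul_eq_one {a b : L} (h : a * b = 1) : b = a⁻¹ := by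
  have := IPLoop.inv_mul_cancel_left a b
  rw [h, IPLoop.mul_one] at this; exact this.symm

theorem one_inv' : (1 : L)⁻¹ = 1 :=
  (eq_inv_of_mul_eq_one (IPLoop.one_mul (1:L))).symm

theorem mul_inv_rev' (x y : L) : (x * y)⁻¹ = y⁻¹ * x⁻¹ := by
  have h1 : (x * y)⁻¹ * x = y⁻¹ := by
    have h := IPLoop.inv_mul_cancel_left (x * y) y⁻¹
    rwa [IPLoop.mul_inv_cancel_right y x] at h
  have h2 := IPLoop.mul_inv_cancel_right x ((x * y)⁻¹)
  rw [h1] at h2; exact h2.symm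

/-! ### Central elements -/

theorem assoc_eq_one_iff {c d e : L} : assoc c d e = 1 ↔ (c * d) * e = c * (d * e) := by
  constructor
  · intro h; exact (eq_of_inv_mul_eq_one h)
  · intro h
    show (c * (d * e))⁻¹ * ((c * d) * e) = 1
    rw [h, inv_mul']

theorem comm_eq_one_iff {c d : L} : comm c d = 1 ↔ c * d = d * c := by
  constructor
  · intro h; exact (eq_of_inv_mul_eq_one h)
  · intro h
    show (d * c)⁻¹ * (c * d) = 1
    rw [h, inv_mul']

theorem cen_comm {z : L} (hz : inCenter z) (x : L) : z * x = x * z :=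
  comm_eq_one_iff.mp (hz.1 x)

theorem cen_assoc1 {z : L} (hz : inCenter z) (x y : L) : (z * x) * y = z * (x * y) :=
  assoc_eq_one_iff.mp ((hz.2 x y).1)

theorem cen_assoc2 {z : L} (hz : inCenter z) (x y : L) : (x * z) * y = x * (z * y) :=
  assoc_eq_one_iff.mp ((hz.2 x y).2.1)

theorem cen_assoc3 {z : L} (hz : inCenter z) (x y : L) : (x * y) * z = x * (y * z) :=
  assoc_eq_one_iff.mp ((hz.2 x y).2.2)

theorem cen_mv1 {z : L} (hz : inCenter z) (x y : L) : (x * z) * y = (x * y) * z := by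
  rw [cen_assoc2 hz, cen_comm hz y, ← cen_assoc3 hz]

theorem cen_mv2 {z : L} (hz : inCenter z) (x y : L) : x * (z * y) = (x * y) * z := by
  rw [← cen_assoc2 hz, cen_mv1 hz]

theorem cen_mv3 {z : L} (hz : inCenter z) (x y : L) : x * (y * z) = (x * y) * z :=
  (cen_assoc3 hz x y).symm

theorem cen_mv4 {z : L} (hz : inCenter z) (x y : L) : (z * x) * y = (x * y) * z := by
  rw [cen_comm hz x, cen_mv1 hz]

theorem inCenter_one : inCenter (1 : L) := by
  constructor
  · intro x
    rw [comm_eq_one_iff, IPLoop.one_mul, IPLoop.mul_one]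
  · intro x y
    refine ⟨?_, ?_, ?_⟩ <;> rw [assoc_eq_one_iff]
    · rw [IPLoop.one_mul, IPLoop.one_mul]
    · rw [IPLoop.mul_one, IPLoop.one_mul]
    · rw [IPLoop.mul_one, IPLoop.mul_one]

theorem inCenter_mul {a b : L} (ha : inCenter a) (hb : inCenter b) : inCenter (a * b) := by
  constructor
  · intro x
    rw [comm_eq_one_iff]
    calc (a * b) * x = a * (b * x) := cen_assoc1 ha b x
      _ = a * (x * b) := by rw [cen_comm hb x]
      _ = (a * x) * b := cen_mv3 hb a x
      _ = (x * a) * b := by rw [cen_comm ha x]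
      _ = x * (a * b) := cen_assoc2 ha x b
  · intro x y
    refine ⟨?_, ?_, ?_⟩ <;> rw [assoc_eq_one_iff]
    · calc ((a * b) * x) * y = (a * (b * x)) * y := by rw [cen_assoc1 ha b x]
        _ = a * ((b * x) * y) := cen_assoc1 ha (b * x) y
        _ = a * (b * (x * y)) := by rw [cen_assoc1 hb x y]
        _ = (a * b) * (x * y) := (cen_assoc1 ha b (x * y)).symm
    · calc (x * (a * b)) * y = ((x * a) * b) * y := by rw [cen_assoc2 ha x b]
        _ = (x * a) * (b * y) := cen_assoc2 hb (x * a) y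
        _ = x * (a * (b * y)) := cen_assoc2 ha x (b * y)
        _ = x * ((a * b) * y) := by rw [cen_assoc1 ha b y]
    · calc (x * y) * (a * b) = ((x * y) * a) * b := (cen_assoc2 ha (x * y) b).symm
        _ = (x * (y * a)) * b := by rw [cen_assoc3 ha x y]
        _ = x * ((y * a) * b) := cen_assoc3 hb x (y * a)
        _ = x * (y * (a * b)) := by rw [cen_assoc2 ha y b]

theorem inCenter_inv {a : L} (ha : inCenter a) : inCenter a⁻¹ := by
  have hcomm : ∀ x : L, a⁻¹ * x = x * a⁻¹ := by
    intro x
    have key : a * (x * a⁻¹) = x := by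
      rw [← cen_assoc1 ha x a⁻¹, cen_comm ha x, IPLoop.mul_inv_cancel_right]
    calc a⁻¹ * x = a⁻¹ * (a * (x * a⁻¹)) := by rw [key]
      _ = x * a⁻¹ := IPLoop.inv_mul_cancel_left a (x * a⁻¹)
  have hs3 : ∀ x y : L, (x * y) * a⁻¹ = x * (y * a⁻¹) := by
    intro x y
    apply mul_right_cancel' (a := a)
    rw [inv_mul_cancel_right', cen_assoc3 ha x (y * a⁻¹), inv_mul_cancel_right']
  have hs2 : ∀ x y : L, (x * a⁻¹) * y = x * (a⁻¹ * y) := by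
    intro x y
    calc (x * a⁻¹) * y = (((x * a⁻¹) * y) * a) * a⁻¹ := (IPLoop.mul_inv_cancel_right a _).symm
      _ = (((x * a⁻¹) * a) * y) * a⁻¹ := by rw [cen_mv1 ha (x * a⁻¹) y]
      _ = (x * y) * a⁻¹ := by rw [inv_mul_cancel_right']
      _ = x * (y * a⁻¹) := hs3 x y
      _ = x * (a⁻¹ * y) := by rw [hcomm y]
  constructor
  · intro x; rw [comm_eq_one_iff]; exact hcomm x
  · intro x y
    refine ⟨?_, ?_, ?_⟩ <;> rw [assoc_eq_one_iff]
    · calc (a⁻¹ * x) * y = (x * a⁻¹) * y := by rw [hcomm x]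
        _ = x * (a⁻¹ * y) := hs2 x y
        _ = x * (y * a⁻¹) := by rw [hcomm y]
        _ = (x * y) * a⁻¹ := (hs3 x y).symm
        _ = a⁻¹ * (x * y) := (hcomm (x * y)).symm
    · exact hs2 x y
    · exact hs3 x y

end MFP
namespace MFP
open IPLoop

variable {L : Type*} [IPLoop L]

/-! ### The center as an additive commutative group -/

def Zc (L : Type*) [IPLoop L] : Type _ := {z : L // inCenter z}

instance : Zero (Zc L) := ⟨⟨1, inCenter_one⟩⟩
instance : Add (Zc L) := ⟨fun a b => ⟨a.1 * b.1, inCenter_mul a.2 b.2⟩⟩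
instance : Neg (Zc L) := ⟨fun a => ⟨a.1⁻¹, inCenter_inv a.2⟩⟩

@[simp] theorem Zc.val_add (a b : Zc L) : (a + b).1 = a.1 * b.1 := rfl
@[simp] theorem Zc.val_zero : (0 : Zc L).1 = 1 := rfl
@[simp] theorem Zc.val_neg (a : Zc L) : (-a).1 = a.1⁻¹ := rfl

instance : AddCommGroup (Zc L) where
  add_assoc a b c := Subtype.ext (cen_assoc3 c.2 a.1 b.1)
  zero_add a := Subtype.ext (IPLoop.one_mul a.1)
  add_zero a := Subtype.ext (IPLoop.mul_one a.1)
  neg_add_cancel a := Subtype.ext (inv_mul' a.1)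
  add_comm a b := Subtype.ext (cen_comm a.2 b.1)
  nsmul := nsmulRec
  zsmul := zsmulRec

section ClassTwo
variable (h2 : ClassTwo L)

/-- Associator, valued in the center. -/
def al (a b c : L) : Zc L := ⟨assoc a b c, h2.2 a b c⟩
/-- Commutator, valued in the center. -/
def ka (a b : L) : Zc L := ⟨comm a b, h2.1 a b⟩

theorem al_val (a b c : L) : (al h2 a b c).1 = assoc a b c := rfl

/-- The basic expansion `(ab)c = (a(bc))·[a,b,c]`. -/
theorem exp_assoc (a b c : L) : (a * b) * c = (a * (b * c)) * (al h2 a b c).1 :=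
  (mul_inv_cancel_left' (a * (b * c)) ((a * b) * c)).symm

/-- The basic expansion `ab = (ba)·[a,b]`. -/
theorem exp_comm (a b : L) : a * b = (b * a) * (ka h2 a b).1 :=
  (mul_inv_cancel_left' (b * a) (a * b)).symm

theorem al_eq_zero_iff {a b c : L} : al h2 a b c = 0 ↔ (a * b) * c = a * (b * c) := by
  exact ⟨fun h => assoc_eq_one_iff.mp (congrArg Subtype.val h),
    fun h => Subtype.ext (assoc_eq_one_iff.mpr h)⟩

/-! ### Congruence modulo the center -/

/-- `x` and `y` differ by a central factor. -/
def ceq (x y : L) : Prop := ∃ z : L, inCenter z ∧ y = x * z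

theorem ceq_refl (x : L) : ceq x x := ⟨1, inCenter_one, (IPLoop.mul_one x).symm⟩

theorem ceq_symm {x y : L} (h : ceq x y) : ceq y x := by
  obtain ⟨z, hz, rfl⟩ := h
  exact ⟨z⁻¹, inCenter_inv hz, (IPLoop.mul_inv_cancel_right z x).symm⟩

theorem ceq_trans {x y w : L} (h : ceq x y) (h' : ceq y w) : ceq x w := by
  obtain ⟨z, hz, rfl⟩ := h
  obtain ⟨z', hz', rfl⟩ := h'
  exact ⟨z * z', inCenter_mul hz hz', cen_assoc3 hz' x z⟩

theorem ceq_mul {x x' y y' : L} (h : ceq x x') (h' : ceq y y') : ceq (x * y) (x' * y') := by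
  obtain ⟨z, hz, rfl⟩ := h
  obtain ⟨z', hz', rfl⟩ := h'
  refine ⟨z * z', inCenter_mul hz hz', ?_⟩
  calc (x * z) * (y * z') = ((x * z) * y) * z' := cen_mv3 hz' (x * z) y
    _ = ((x * y) * z) * z' := by rw [cen_mv1 hz x y]
    _ = (x * y) * (z * z') := cen_assoc3 hz' (x * y) z

theorem ceq_inv {x x' : L} (h : ceq x x') : ceq x⁻¹ x'⁻¹ := by
  obtain ⟨z, hz, rfl⟩ := h
  refine ⟨z⁻¹, inCenter_inv hz, ?_⟩
  rw [mul_inv_rev', cen_comm (inCenter_inv hz) x⁻¹]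

theorem ceq_comm (h2 : ClassTwo L) (x y : L) : ceq (x * y) (y * x) :=
  ⟨comm y x, h2.1 y x, exp_comm h2 y x⟩

theorem ceq_assoc (h2 : ClassTwo L) (x y z : L) : ceq ((x * y) * z) (x * (y * z)) :=
  ceq_symm ⟨assoc x y z, h2.2 x y z, exp_assoc h2 x y z⟩

theorem conj_cancel {z : L} (hz : inCenter z) (u v : L) :
    u⁻¹ * v = (u * z)⁻¹ * (v * z) := by
  rw [mul_inv_rev' u z]
  rw [cen_mv4 (inCenter_inv hz) u⁻¹ (v * z), cen_mv3 hz u⁻¹ v,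
    IPLoop.mul_inv_cancel_right]

/-- the associator only depends on the arguments modulo the center (slot 1) -/
theorem al_congr1 {a a' : L} (b c : L) (h : ceq a a') : al h2 a b c = al h2 a' b c := by
  obtain ⟨z, hz, rfl⟩ := h
  apply Subtype.ext
  show assoc a b c = assoc (a * z) b c
  unfold IPLoop.assoc
  have e1 : (a * z) * (b * c) = (a * (b * c)) * z := cen_mv1 hz a (b * c)
  have e2 : ((a * z) * b) * c = ((a * b) * c) * z := by
    rw [cen_mv1 hz a b, cen_mv1 hz (a * b) c]
  rw [e1, e2]
  exact conj_cancel hz (a * (b * c)) ((a * b) * c)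
theorem al_congr2 {b b' : L} (a c : L) (h : ceq b b') : al h2 a b c = al h2 a b' c := by
  obtain ⟨z, hz, rfl⟩ := h
  apply Subtype.ext
  show assoc a b c = assoc a (b * z) c
  unfold IPLoop.assoc
  have e1 : a * ((b * z) * c) = (a * (b * c)) * z := by
    rw [cen_mv1 hz b c, cen_mv3 hz a (b * c)]
  have e2 : (a * (b * z)) * c = ((a * b) * c) * z := by
    rw [cen_mv3 hz a b, cen_mv1 hz (a * b) c]
  rw [e1, e2]
  exact conj_cancel hz (a * (b * c)) ((a * b) * c)
theorem al_congr3 {c c' : L} (a b : L) (h : ceq c c') : al h2 a b c = al h2 a b c' := by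
  obtain ⟨z, hz, rfl⟩ := h
  apply Subtype.ext
  show assoc a b c = assoc a b (c * z)
  unfold IPLoop.assoc
  have e1 : a * (b * (c * z)) = (a * (b * c)) * z := by
    rw [cen_mv3 hz b c, cen_mv3 hz a (b * c)]
  have e2 : (a * b) * (c * z) = ((a * b) * c) * z := cen_mv3 hz (a * b) c
  rw [e1, e2]
  exact conj_cancel hz (a * (b * c)) ((a * b) * c)

theorem ka_congr1 {a a' : L} (b : L) (h : ceq a a') : ka h2 a b = ka h2 a' b := by
  obtain ⟨z, hz, rfl⟩ := h
  apply Subtype.ext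
  show comm a b = comm (a * z) b
  unfold IPLoop.comm
  have e1 : b * (a * z) = (b * a) * z := cen_mv3 hz b a
  have e2 : (a * z) * b = (a * b) * z := cen_mv1 hz a b
  rw [e1, e2]
  exact conj_cancel hz (b * a) (a * b)

theorem ka_congr2 {b b' : L} (a : L) (h : ceq b b') : ka h2 a b = ka h2 a b' := by
  obtain ⟨z, hz, rfl⟩ := h
  apply Subtype.ext
  show comm a b = comm a (b * z)
  unfold IPLoop.comm
  have e1 : (b * z) * a = (b * a) * z := cen_mv1 hz b a
  have e2 : a * (b * z) = (a * b) * z := cen_mv3 hz a b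
  rw [e1, e2]
  exact conj_cancel hz (b * a) (a * b)

end ClassTwo
end MFP
namespace MFP
open IPLoop

variable {L : Type*} [IPLoop L]

section Identities

theorem al_one1 (h2 : ClassTwo L) (b c : L) : al h2 1 b c = 0 := by
  apply Subtype.ext
  show (1 * (b * c))⁻¹ * ((1 * b) * c) = 1
  rw [IPLoop.one_mul, IPLoop.one_mul, inv_mul']

theorem al_one2 (h2 : ClassTwo L) (a c : L) : al h2 a 1 c = 0 := by
  apply Subtype.ext
  show (a * (1 * c))⁻¹ * ((a * 1) * c) = 1
  rw [IPLoop.one_mul, IPLoop.mul_one, inv_mul']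

theorem al_one3 (h2 : ClassTwo L) (a b : L) : al h2 a b 1 = 0 := by
  apply Subtype.ext
  show (a * (b * 1))⁻¹ * ((a * b) * 1) = 1
  rw [IPLoop.mul_one, IPLoop.mul_one, inv_mul']

theorem alP1 (h2 : ClassTwo L) (a b : L) : al h2 a b b⁻¹ = 0 := by
  apply Subtype.ext
  show (a * (b * b⁻¹))⁻¹ * ((a * b) * b⁻¹) = 1
  rw [mul_inv', IPLoop.mul_one, IPLoop.mul_inv_cancel_right, inv_mul']

theorem alP2 (h2 : ClassTwo L) (a b : L) : al h2 a b⁻¹ b = 0 := by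
  apply Subtype.ext
  show (a * (b⁻¹ * b))⁻¹ * ((a * b⁻¹) * b) = 1
  rw [inv_mul', IPLoop.mul_one, inv_mul_cancel_right', inv_mul']

theorem alP3 (h2 : ClassTwo L) (a b : L) : al h2 b b⁻¹ a = 0 := by
  apply Subtype.ext
  show (b * (b⁻¹ * a))⁻¹ * ((b * b⁻¹) * a) = 1
  rw [mul_inv_cancel_left', mul_inv', IPLoop.one_mul, inv_mul']

theorem alP4 (h2 : ClassTwo L) (a b : L) : al h2 b⁻¹ b a = 0 := by
  apply Subtype.ext
  show (b⁻¹ * (b * a))⁻¹ * ((b⁻¹ * b) * a) = 1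
  rw [IPLoop.inv_mul_cancel_left, inv_mul', IPLoop.one_mul, inv_mul']

/-- The cocycle identity. -/
theorem coc (h2 : ClassTwo L) (x y z w : L) :
    al h2 x y (z * w) + al h2 (x * y) z w
      = al h2 y z w + al h2 x (y * z) w + al h2 x y z := by
  have pa : ((x * y) * z) * w
      = (x * (y * (z * w))) *
        (((al h2 y z w).1 * (al h2 x (y * z) w).1) * (al h2 x y z).1) := by
    rw [exp_assoc h2 x y z]
    rw [cen_mv1 (al h2 x y z).2 (x * (y * z)) w]
    rw [exp_assoc h2 x (y * z) w]
    rw [exp_assoc h2 y z w]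
    rw [cen_mv3 (al h2 y z w).2 x (y * (z * w))]
    rw [cen_assoc3 (al h2 x (y * z) w).2 (x * (y * (z * w))) (al h2 y z w).1]
    rw [cen_assoc3 (al h2 x y z).2 (x * (y * (z * w)))
      ((al h2 y z w).1 * (al h2 x (y * z) w).1)]
  have pb : ((x * y) * z) * w
      = (x * (y * (z * w))) * ((al h2 x y (z * w)).1 * (al h2 (x * y) z w).1) := by
    rw [exp_assoc h2 (x * y) z w]
    rw [exp_assoc h2 x y (z * w)]
    rw [cen_assoc3 (al h2 (x * y) z w).2 (x * (y * (z * w))) (al h2 x y (z * w)).1]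
  apply Subtype.ext
  exact mul_left_cancel' (pb.symm.trans pa)

/-- full Moufang expansion -/
theorem Mfull (h2 : ClassTwo L) (hM : IsMoufang L) (c d e : L) :
    al h2 c e c + al h2 d (c * e) c + al h2 d c e = 0 := by
  have pa : ((d * c) * e) * c
      = (d * (c * (e * c))) *
        (((al h2 c e c).1 * (al h2 d (c * e) c).1) * (al h2 d c e).1) := by
    rw [exp_assoc h2 d c e]
    rw [cen_mv1 (al h2 d c e).2 (d * (c * e)) c]
    rw [exp_assoc h2 d (c * e) c]
    rw [exp_assoc h2 c e c]
    rw [cen_mv3 (al h2 c e c).2 d (c * (e * c))]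
    rw [cen_assoc3 (al h2 d (c * e) c).2 (d * (c * (e * c))) (al h2 c e c).1]
    rw [cen_assoc3 (al h2 d c e).2 (d * (c * (e * c)))
      ((al h2 c e c).1 * (al h2 d (c * e) c).1)]
  have pb := hM c d e
  rw [pa] at pb
  apply Subtype.ext
  show ((al h2 c e c).1 * (al h2 d (c * e) c).1) * (al h2 d c e).1 = 1
  have : (d * (c * (e * c))) * (((al h2 c e c).1 * (al h2 d (c*e) c).1) * (al h2 d c e).1)
      = (d * (c * (e * c))) * 1 := by rw [IPLoop.mul_one]; exact pb
  exact mul_left_cancel' this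

/-- flexibility: `α c e c = 0` -/
theorem alM1 (h2 : ClassTwo L) (hM : IsMoufang L) (c e : L) : al h2 c e c = 0 := by
  have h := Mfull h2 hM c 1 e
  rwa [al_one1, al_one1, add_zero, add_zero] at h

/-- right Moufang relation -/
theorem alRM (h2 : ClassTwo L) (hM : IsMoufang L) (d c e : L) : al h2 d (c * e) c = - al h2 d c e := by
  have h := Mfull h2 hM c d e
  rw [alM1 h2 hM, zero_add] at h
  rwa [add_eq_zero_iff_eq_neg] at h

theorem flex (h2 : ClassTwo L) (hM : IsMoufang L) (c e : L) : (c * e) * c = c * (e * c) :=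
  assoc_eq_one_iff.mp (congrArg Subtype.val (alM1 h2 hM c e))

/-- the left Moufang law -/
theorem leftMoufang (h2 : ClassTwo L) (hM : IsMoufang L) (c d e : L) : ((c * e) * c) * d = c * (e * (c * d)) := by
  have h := congrArg (fun t => t⁻¹) (hM c⁻¹ d⁻¹ e⁻¹)
  simp only [mul_inv_rev', inv_inv'] at h
  exact h.symm

/-- left Moufang relation -/
theorem alLM (h2 : ClassTwo L) (hM : IsMoufang L) (c e d : L) : al h2 c (e * c) d = - al h2 e c d := by
  have pa : ((c * e) * c) * d
      = (c * (e * (c * d))) * ((al h2 e c d).1 * (al h2 c (e * c) d).1) := by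
    rw [flex h2 hM c e]
    rw [exp_assoc h2 c (e * c) d]
    rw [exp_assoc h2 e c d]
    rw [cen_mv3 (al h2 e c d).2 c (e * (c * d))]
    rw [cen_assoc3 (al h2 c (e * c) d).2 (c * (e * (c * d))) (al h2 e c d).1]
  have pb := leftMoufang h2 hM c d e
  rw [pa] at pb
  have h1 : (al h2 e c d).1 * (al h2 c (e * c) d).1 = 1 := by
    apply mul_left_cancel' (a := c * (e * (c * d)))
    rw [IPLoop.mul_one]; exact pb
  have h0 : al h2 e c d + al h2 c (e * c) d = 0 := Subtype.ext h1
  rw [add_comm] at h0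
  rwa [add_eq_zero_iff_eq_neg] at h0

/-- inverses: `α a⁻¹ b⁻¹ c⁻¹ = α c b a` -/
theorem alINV (h2 : ClassTwo L) (a b c : L) : al h2 a⁻¹ b⁻¹ c⁻¹ = al h2 c b a := by
  apply Subtype.ext
  show (a⁻¹ * (b⁻¹ * c⁻¹))⁻¹ * ((a⁻¹ * b⁻¹) * c⁻¹) = (c * (b * a))⁻¹ * ((c * b) * a)
  rw [← mul_inv_rev' c b, ← mul_inv_rev' (c * b) a, ← mul_inv_rev' b a,
    ← mul_inv_rev' c (b * a), inv_inv']
  rw [exp_assoc h2 c b a]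
  rw [cen_mv1 (al h2 c b a).2 (c * (b * a)) (c * (b * a))⁻¹, mul_inv',
    IPLoop.one_mul, IPLoop.inv_mul_cancel_left]

end Identities
end MFP
namespace MFP
open IPLoop

variable {L : Type*} [IPLoop L]

/-- swap the two factors of a product in the third argument slot -/
theorem alS3 (h2 : ClassTwo L) (a b u v : L) :
    al h2 a b (u * v) = al h2 a b (v * u) := al_congr3 h2 a b (ceq_comm h2 u v)

theorem alS1 (h2 : ClassTwo L) (a b u v : L) :
    al h2 (u * v) a b = al h2 (v * u) a b := al_congr1 h2 a b (ceq_comm h2 u v)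

theorem alS2 (h2 : ClassTwo L) (a b u v : L) :
    al h2 a (u * v) b = al h2 a (v * u) b := al_congr2 h2 a b (ceq_comm h2 u v)

theorem alD1 (h2 : ClassTwo L) (hM : IsMoufang L) (a b : L) : al h2 a a b = 0 := by
  have h := alLM h2 hM a 1 b
  rw [IPLoop.one_mul, al_one1] at h
  rw [h, neg_zero]

theorem alD2 (h2 : ClassTwo L) (hM : IsMoufang L) (a b : L) : al h2 a b b = 0 := by
  have h := alRM h2 hM a b 1
  rw [IPLoop.mul_one, al_one3] at h
  rw [h, neg_zero]

theorem alC6 (h2 : ClassTwo L) (y z w : L) :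
    al h2 y⁻¹ (y * z) w = - al h2 y z w := by
  have h := coc h2 y⁻¹ y z w
  rw [inv_mul' y, alP4 h2 (z * w) y, alP4 h2 z y, al_one1] at h
  linear_combination (norm := abel1) -h

theorem alK (h2 : ClassTwo L) (hM : IsMoufang L) (x y w : L) :
    al h2 x y (x * w) = - al h2 (x * y) x w := by
  have h := coc h2 x y x w
  rw [alLM h2 hM x y w, alM1 h2 hM x y] at h
  linear_combination (norm := abel1) h

theorem alStar (h2 : ClassTwo L) (hM : IsMoufang L) (y z w : L) :
    al h2 (w * y) z w - al h2 (w * y) w z = al h2 y z w + al h2 w y z := by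
  have h := coc h2 w y z w
  rw [alM1 h2 hM w (y * z)] at h
  have e := (alS3 h2 w y z w).trans (alK h2 hM w y z)
  rw [e] at h
  linear_combination (norm := abel1) h

theorem alSS (h2 : ClassTwo L) (hM : IsMoufang L) (y z w : L) :
    al h2 (z * y) z w + al h2 (w * y) w z = al h2 w z y + al h2 z w y := by
  have i1 := alStar h2 hM (z * y) z w
  rw [alRM h2 hM w z y] at i1
  have i2 := alStar h2 hM (w * y) w z
  rw [alRM h2 hM z w y] at i2
  have c1 : ceq (z * (w * y)) ((z * w) * y) := ceq_symm (ceq_assoc h2 z w y)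
  have c2 : ceq ((z * w) * y) ((w * z) * y) := ceq_mul (ceq_comm h2 z w) (ceq_refl y)
  have c3 : ceq ((w * z) * y) (w * (z * y)) := ceq_assoc h2 w z y
  have ce : ceq (z * (w * y)) (w * (z * y)) := ceq_trans (ceq_trans c1 c2) c3
  have e1 : al h2 (z * (w * y)) w z = al h2 (w * (z * y)) w z := al_congr1 h2 w z ce
  have e2 : al h2 (z * (w * y)) z w = al h2 (w * (z * y)) z w := al_congr1 h2 z w ce
  rw [e1, e2] at i2
  linear_combination (norm := abel1) -i1 - i2

theorem alN1 (h2 : ClassTwo L) (hM : IsMoufang L) (u v t : L) :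
    al h2 (u * v) u t = al h2 v u t := by
  have h := alLM h2 hM (u * v) (u * (u * v)⁻¹) t
  rw [inv_mul_cancel_right'] at h
  have ce1 : ceq (u * (u * v)⁻¹) v⁻¹ := by
    rw [mul_inv_rev' u v]
    have c1 : ceq (u * (v⁻¹ * u⁻¹)) ((u * v⁻¹) * u⁻¹) := ceq_symm (ceq_assoc h2 u v⁻¹ u⁻¹)
    have c2 : ceq ((u * v⁻¹) * u⁻¹) ((v⁻¹ * u) * u⁻¹) :=
      ceq_mul (ceq_comm h2 u v⁻¹) (ceq_refl u⁻¹)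
    have c3 : ceq ((v⁻¹ * u) * u⁻¹) (v⁻¹ * (u * u⁻¹)) := ceq_assoc h2 v⁻¹ u u⁻¹
    have c := ceq_trans (ceq_trans c1 c2) c3
    rwa [mul_inv' u, IPLoop.mul_one] at c
  have e1 : al h2 (u * (u * v)⁻¹) (u * v) t = al h2 v⁻¹ (u * v) t :=
    al_congr1 h2 (u * v) t ce1
  have e2 : al h2 v⁻¹ (u * v) t = al h2 v⁻¹ (v * u) t := alS2 h2 v⁻¹ t u v
  rw [e1, e2, alC6 h2 v u t] at h
  rw [h, neg_neg]

theorem alN2 (h2 : ClassTwo L) (hM : IsMoufang L) (a b c : L) :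
    al h2 a b (b * c) = al h2 a b c := by
  have h := alN1 h2 hM b⁻¹ c⁻¹ a⁻¹
  rw [← mul_inv_rev' c b, alINV h2 (c * b) b a, alINV h2 c b a] at h
  exact (alS3 h2 a b b c).trans h

theorem alSkew23 (h2 : ClassTwo L) (hM : IsMoufang L) (a b c : L) :
    al h2 a c b = - al h2 a b c := by
  have e0 : b * (b⁻¹ * c) = c := mul_inv_cancel_left' b c
  have h := alRM h2 hM a b (b⁻¹ * c)
  rw [e0] at h
  have h' := alN2 h2 hM a b (b⁻¹ * c)
  rw [e0] at h'
  rw [← h'] at h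
  exact h

theorem alSkew12 (h2 : ClassTwo L) (hM : IsMoufang L) (a b c : L) :
    al h2 b a c = - al h2 a b c := by
  have h := alSS h2 hM c a b
  rw [alN1 h2 hM a c b, alN1 h2 hM b c a] at h
  rw [alSkew23 h2 hM c b a] at h
  linear_combination (norm := abel1) -h

theorem alCyc (h2 : ClassTwo L) (hM : IsMoufang L) (a b c : L) :
    al h2 a b c = al h2 b c a := by
  have h1 := alSkew23 h2 hM b a c
  have h2' := alSkew12 h2 hM b a c
  linear_combination (norm := abel1) h2' - h1

theorem alCyc2 (h2 : ClassTwo L) (hM : IsMoufang L) (a b c : L) :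
    al h2 a b c = al h2 c a b :=
  (alCyc h2 hM a b c).trans (alCyc h2 hM b c a)

/-- linearity defect in the last slot -/
def Hd (h2 : ClassTwo L) (a b c d : L) : Zc L :=
  al h2 a b (c * d) - al h2 a b c - al h2 a b d

theorem Hd_skew (h2 : ClassTwo L) (hM : IsMoufang L) (a b c d : L) :
    Hd h2 a b c d = - Hd h2 b a c d := by
  unfold Hd
  rw [alSkew12 h2 hM a b (c * d), alSkew12 h2 hM a b c, alSkew12 h2 hM a b d]
  abel

theorem Hd_sym34 (h2 : ClassTwo L) (a b c d : L) :
    Hd h2 a b c d = Hd h2 a b d c := by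
  unfold Hd
  rw [alS3 h2 a b c d]
  abel

theorem Hd_R4 (h2 : ClassTwo L) (hM : IsMoufang L) (x y z w : L) :
    Hd h2 x y z w + Hd h2 z w x y + Hd h2 x w y z = 0 := by
  have h := coc h2 x y z w
  rw [alSkew12 h2 hM (y * z) x w] at h
  rw [alCyc h2 hM (x * y) z w] at h
  rw [show al h2 (y * z) x w = al h2 x w (y * z) from alCyc h2 hM (y * z) x w] at h
  unfold Hd
  rw [alCyc2 h2 hM z w x, alCyc2 h2 hM z w y]
  rw [alSkew23 h2 hM x y w, alSkew23 h2 hM x z w]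
  linear_combination (norm := abel1) h

theorem Hd_pair (h2 : ClassTwo L) (hM : IsMoufang L) (x y z w : L) :
    Hd h2 x w y z = - Hd h2 y z x w := by
  have i1 := Hd_R4 h2 hM x y z w
  have i2 := Hd_R4 h2 hM z w x y
  have i3 : Hd h2 x w y z = Hd h2 z y w x := by
    linear_combination (norm := abel1) i1 - i2
  rw [i3, Hd_skew h2 hM z y w x, Hd_sym34 h2 y z w x]

theorem Hd_zero (h2 : ClassTwo L) (hM : IsMoufang L) (x y z w : L) :
    Hd h2 x w y z = 0 := by
  have i1 := Hd_R4 h2 hM x y z w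
  have i3 : Hd h2 z w x y = - Hd h2 x y z w := Hd_pair h2 hM z x y w
  rw [i3] at i1
  linear_combination (norm := abel1) i1

theorem alLin3 (h2 : ClassTwo L) (hM : IsMoufang L) (x y z w : L) :
    al h2 x y (z * w) = al h2 x y z + al h2 x y w := by
  have h := Hd_zero h2 hM x z w y
  unfold Hd at h
  linear_combination (norm := abel1) h

theorem alLin1 (h2 : ClassTwo L) (hM : IsMoufang L) (x y z w : L) :
    al h2 (x * y) z w = al h2 x z w + al h2 y z w := by
  have h := Hd_zero h2 hM z x y w
  unfold Hd at h
  rw [alCyc h2 hM (x * y) z w, alCyc h2 hM x z w, alCyc h2 hM y z w]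
  linear_combination (norm := abel1) h

end MFP
namespace MFP
open IPLoop

variable {L : Type*} [IPLoop L]

/-- expansion of the commutator of a product -/
theorem kaCC (h2 : ClassTwo L) (x y z : L) :
    ka h2 (x * y) z + al h2 x z y
      = (al h2 z x y + ka h2 x z) + (ka h2 y z + al h2 x y z) := by
  have e3 : (x * y) * z = (x * (z * y)) * ((ka h2 y z).1 * (al h2 x y z).1) := by
    rw [exp_assoc h2 x y z]
    rw [exp_comm h2 y z]
    rw [cen_mv3 (ka h2 y z).2 x (z * y)]
    rw [cen_assoc3 (al h2 x y z).2 (x * (z * y)) (ka h2 y z).1]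
  have e1 : (x * z) * y = (z * (x * y)) * ((al h2 z x y).1 * (ka h2 x z).1) := by
    rw [exp_comm h2 x z]
    rw [cen_mv1 (ka h2 x z).2 (z * x) y]
    rw [exp_assoc h2 z x y]
    rw [cen_assoc3 (ka h2 x z).2 (z * (x * y)) (al h2 z x y).1]
  have e2 : (x * z) * y = (x * (z * y)) * (al h2 x z y).1 := exp_assoc h2 x z y
  have e4 : (x * y) * z = (z * (x * y)) * (ka h2 (x * y) z).1 := exp_comm h2 (x * y) z
  have e5 : ((z * (x * y)) * (ka h2 (x * y) z).1) * (al h2 x z y).1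
      = ((x * (z * y)) * ((ka h2 y z).1 * (al h2 x y z).1)) * (al h2 x z y).1 := by
    rw [← e4, ← e3]
  have e6 : ((x * (z * y)) * ((ka h2 y z).1 * (al h2 x y z).1)) * (al h2 x z y).1
      = ((x * (z * y)) * (al h2 x z y).1) * ((ka h2 y z).1 * (al h2 x y z).1) :=
    cen_mv1 (inCenter_mul (ka h2 y z).2 (al h2 x y z).2) (x * (z * y)) (al h2 x z y).1
  have e7 : ((x * (z * y)) * (al h2 x z y).1) * ((ka h2 y z).1 * (al h2 x y z).1)
      = ((z * (x * y)) * ((al h2 z x y).1 * (ka h2 x z).1))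
          * ((ka h2 y z).1 * (al h2 x y z).1) := by
    rw [← e2, e1]
  have e8 : ((z * (x * y)) * (ka h2 (x * y) z).1) * (al h2 x z y).1
      = (z * (x * y)) * ((ka h2 (x * y) z).1 * (al h2 x z y).1) :=
    cen_assoc3 (al h2 x z y).2 (z * (x * y)) (ka h2 (x * y) z).1
  have e9 : ((z * (x * y)) * ((al h2 z x y).1 * (ka h2 x z).1))
        * ((ka h2 y z).1 * (al h2 x y z).1)
      = (z * (x * y)) * (((al h2 z x y).1 * (ka h2 x z).1)
          * ((ka h2 y z).1 * (al h2 x y z).1)) :=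
    cen_assoc3 (inCenter_mul (ka h2 y z).2 (al h2 x y z).2) (z * (x * y)) _
  have key := mul_left_cancel' (e8.symm.trans (e5.trans (e6.trans (e7.trans e9))))
  exact Subtype.ext key

/-- the associator is killed by 6 -/
theorem alSix (h2 : ClassTwo L) (hM : IsMoufang L) (x y z : L) :
    (6 : ℕ) • al h2 x y z = 0 := by
  have c1 := kaCC h2 x y z
  have c2 := kaCC h2 y x z
  have c3 : ka h2 (x * y) z = ka h2 (y * x) z := ka_congr1 h2 z (ceq_comm h2 x y)
  rw [alCyc h2 hM z x y, alSkew23 h2 hM x y z] at c1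
  rw [alCyc h2 hM z y x, alSkew23 h2 hM y x z] at c2
  rw [alSkew12 h2 hM x y z] at c2
  linear_combination (norm := abel1) c3 - c1 + c2

theorem alPow (h2 : ClassTwo L) (hM : IsMoufang L) (c d e : L) :
    ∀ n : ℕ, al h2 (c ^ n) d e = n • al h2 c d e := by
  intro n
  induction n with
  | zero =>
    rw [show (c ^ (0:ℕ) : L) = 1 from rfl, al_one1, zero_smul]
  | succ n ih =>
    rw [show (c ^ (n+1) : L) = c * c ^ n from rfl, alLin1 h2 hM c (c ^ n) d e, ih,
      succ_nsmul]
    abel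

theorem pow_ord_eq_one {c : L} {m : ℕ} (hm : 0 < m) (h : ordOf c = m) : c ^ m = 1 := by
  have hne : {n : ℕ | 0 < n ∧ c ^ n = 1}.Nonempty := by
    by_contra hemp
    rw [Set.not_nonempty_iff_eq_empty] at hemp
    have h0 : ordOf c = 0 := by
      unfold IPLoop.ordOf
      rw [hemp, Nat.sInf_empty]
    omega
  have hmem := Nat.sInf_mem hne
  have : ordOf c ∈ {n : ℕ | 0 < n ∧ c ^ n = 1} := hmem
  rw [h] at this
  exact this.2

end MFP

open IPLoop in
/-- For a prime `p > 3` and a Moufang loop `L` of class at most 2, the subloop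
`L_p` is associative; in particular a Moufang `p`-loop of class at most 2 with
`p > 3` is a group. -/
theorem stmt6 {L : Type*} [IPLoop L] (hM : IsMoufang L) (h2 : ClassTwo L)
    (p : ℕ) (hp : p.Prime) (hp3 : 3 < p) :
    (∀ c ∈ Lp L p, ∀ d ∈ Lp L p, ∀ e ∈ Lp L p, (c * d) * e = c * (d * e)) ∧
    ((∀ x : L, ∃ k : ℕ, ordOf x = p ^ k) →
      ∀ c d e : L, (c * d) * e = c * (d * e)) := by
  have key : ∀ c : L, (∃ k : ℕ, ordOf c = p ^ k) → ∀ d e : L, (c * d) * e = c * (d * e) := by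
    rintro c ⟨k, hk⟩ d e
    have hpos : 0 < p ^ k := pow_pos (by omega) k
    have h1 : c ^ (p ^ k) = 1 := MFP.pow_ord_eq_one hpos hk
    have h2a : (p ^ k : ℕ) • MFP.al h2 c d e = 0 := by
      have h := MFP.alPow h2 hM c d e (p ^ k)
      rw [h1, MFP.al_one1] at h
      exact h.symm
    have h6 : (6 : ℕ) • MFP.al h2 c d e = 0 := MFP.alSix h2 hM c d e
    have d1 : addOrderOf (MFP.al h2 c d e) ∣ 6 := addOrderOf_dvd_of_nsmul_eq_zero h6
    have d2 : addOrderOf (MFP.al h2 c d e) ∣ p ^ k := addOrderOf_dvd_of_nsmul_eq_zero h2a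
    have dcop : Nat.Coprime 6 (p ^ k) := by
      have h2p : Nat.Coprime 2 p := (Nat.coprime_primes Nat.prime_two hp).mpr (by omega)
      have h3p : Nat.Coprime 3 p := (Nat.coprime_primes Nat.prime_three hp).mpr (by omega)
      have h6p : Nat.Coprime 6 p := Nat.Coprime.mul h2p h3p
      exact h6p.pow_right k
    have hdvd1 : addOrderOf (MFP.al h2 c d e) ∣ 1 := by
      have hg := Nat.dvd_gcd d1 d2
      rwa [Nat.Coprime.gcd_eq_one dcop] at hg
    have hz : MFP.al h2 c d e = 0 := by
      have := Nat.dvd_one.mp hdvd1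
      exact AddMonoid.addOrderOf_eq_one_iff.mp this
    exact (MFP.al_eq_zero_iff h2).mp hz
  constructor
  · intro c hc d _ e _
    exact key c hc d e
  · intro hall c d e
    exact key c (hall c) d e
end
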